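/- arXiv:1310.4680 — 2 statements merged into one kernel-verified Lean document; each statement's English description precedes it below -/
import Mathlib

section
/- Let H be a weak Hopf algebra and A a left-left Yetter–Drinfeld module over H which is simultaneously a left H-module algebra and a left H-comodule algebra. Then on the smash product A # H the map λ(a # h) = a⁽⁻¹⁾h₁ ⊗ (a⁽⁰⁾ # h₂) is well-defined on A ⊗_{H_t} H, i.e. λ(a # zh) = λ(a(z·1_A) # h) for all z ∈ H_t. -/
open TensorProduct LinearMap

/-- A weak Hopf algebra over a commutative ring `k`: a `k`-algebra `H` equipped with a
coassociative counital comultiplication which is multiplicative, satisfying the weak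
comultiplication axiom `Δ²(1) = (Δ(1)⊗1)(1⊗Δ(1)) = (1⊗Δ(1))(Δ(1)⊗1)`, the weak counit axiom
`ε(xyz) = ε(xy₁)ε(y₂z) = ε(xy₂)ε(y₁z)`, and an antipode satisfying
`h₁S(h₂) = ε(1₁h)1₂`, `S(h₁)h₂ = 1₁ε(h1₂)` and `S(h₁)h₂S(h₃) = S(h)`. -/
structure WeakHopfAlgebra (k H : Type*) [CommRing k] [Ring H] [Algebra k H] where
  comul : H →ₗ[k] H ⊗[k] H
  counit : H →ₗ[k] k
  antipode : H →ₗ[k] H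
  comul_coassoc : (TensorProduct.assoc k H H H).toLinearMap ∘ₗ
      (LinearMap.rTensor H comul) ∘ₗ comul = (LinearMap.lTensor H comul) ∘ₗ comul
  counit_comul : (TensorProduct.lid k H).toLinearMap ∘ₗ
      (LinearMap.rTensor H counit) ∘ₗ comul = LinearMap.id
  comul_counit : (TensorProduct.rid k H).toLinearMap ∘ₗ
      (LinearMap.lTensor H counit) ∘ₗ comul = LinearMap.id
  comul_mul : ∀ x y : H, comul (x * y) = comul x * comul y
  comul_one_left : (LinearMap.rTensor H comul) (comul 1)
      = (comul 1 ⊗ₜ[k] (1 : H)) * ((TensorProduct.assoc k H H H).symm ((1 : H) ⊗ₜ[k] comul 1))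
  comul_one_right : (LinearMap.rTensor H comul) (comul 1)
      = ((TensorProduct.assoc k H H H).symm ((1 : H) ⊗ₜ[k] comul 1)) * (comul 1 ⊗ₜ[k] (1 : H))
  counit_mul_left : ∀ x y z : H, counit (x * y * z)
      = LinearMap.mul' k k ((TensorProduct.map (counit ∘ₗ LinearMap.mulLeft k x)
          (counit ∘ₗ LinearMap.mulRight k z)) (comul y))
  counit_mul_right : ∀ x y z : H, counit (x * y * z)
      = LinearMap.mul' k k ((TensorProduct.map (counit ∘ₗ LinearMap.mulRight k z)
          (counit ∘ₗ LinearMap.mulLeft k x)) (comul y))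
  antipode_right : ∀ h : H,
      LinearMap.mul' k H ((LinearMap.lTensor H antipode) (comul h))
        = (TensorProduct.lid k H) ((LinearMap.rTensor H
            (counit ∘ₗ LinearMap.mulRight k h)) (comul 1))
  antipode_left : ∀ h : H,
      LinearMap.mul' k H ((LinearMap.rTensor H antipode) (comul h))
        = (TensorProduct.rid k H) ((LinearMap.lTensor H
            (counit ∘ₗ LinearMap.mulLeft k h)) (comul 1))
  antipode_mid : ∀ h : H,
      LinearMap.mul' k H ((TensorProduct.map
          (LinearMap.mul' k H ∘ₗ LinearMap.rTensor H antipode) antipode)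
            ((LinearMap.rTensor H comul) (comul h))) = antipode h

namespace WeakHopfAlgebra

variable {k H : Type*} [CommRing k] [Ring H] [Algebra k H]

/-- The target map `ε_t(h) = ε(1₁h)1₂`. -/
noncomputable def εt (W : WeakHopfAlgebra k H) : H →ₗ[k] H :=
  (TensorProduct.lid k H).toLinearMap ∘ₗ (LinearMap.rTensor H W.counit) ∘ₗ
    (LinearMap.mulLeft k (W.comul 1)) ∘ₗ ((TensorProduct.mk k H H).flip 1)

/-- The source map `ε_s(h) = 1₁ε(h1₂)`. -/
noncomputable def εs (W : WeakHopfAlgebra k H) : H →ₗ[k] H :=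
  (TensorProduct.rid k H).toLinearMap ∘ₗ (LinearMap.lTensor H W.counit) ∘ₗ
    (LinearMap.mulRight k (W.comul 1)) ∘ₗ ((TensorProduct.mk k H H) 1)

end WeakHopfAlgebra

namespace WeakHopfAlgebra

variable {k H : Type*} [CommRing k] [Ring H] [Algebra k H]

/-- The subspace of relations defining the relative tensor product `A ⊗_{H_t} H`
underlying the smash product `A # H`: it is spanned by the elements
`(a·z) ⊗ h - a ⊗ (zh)` for `z ∈ H_t`, where `a·z := a (z·1_A)`. -/
noncomputable def smashRel (W : WeakHopfAlgebra k H) {A : Type*} [AddCommGroup A] [Module k A]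
    (mulA : A →ₗ[k] A →ₗ[k] A) (oneA : A) (act : H →ₗ[k] A →ₗ[k] A) :
    Submodule k (A ⊗[k] H) :=
  Submodule.span k {x | ∃ (a : A) (h z : H), z ∈ Set.range W.εt ∧
    x = (mulA a (act z oneA)) ⊗ₜ[k] h - a ⊗ₜ[k] (z * h)}

end WeakHopfAlgebra

/-! For `z ∈ H_t` one has `Δ(zh) = (z ⊗ 1)Δ(h)` and `λ_A(a(z·1_A)) = λ_A(a)(z ⊗ 1)`, so both
sides are the image of `λ_A(a)(z ⊗ 1) ⊗ Δ(h)` under `(x ⊗ b) ⊗ (u ⊗ v) ↦ xu ⊗ (b # v)`.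
Since `λ_A` is multiplicative, the second identity reduces to `λ_A(z·1_A) = λ_A(1_A)(z ⊗ 1)`.
This is the Yetter–Drinfeld condition for `z` and `1_A`, read through `Δ(z) = 1₁z ⊗ 1₂`
and the fact that the left leg of `λ_A(1_A)` lies in `H_s`, which commutes with `H_t`. -/

namespace TensorProduct

variable {k M N : Type*} [CommRing k] [AddCommGroup M] [Module k M] [AddCommGroup N]
  [Module k N]

theorem exists_fin_sum_tmul (x : M ⊗[k] N) :
    ∃ (n : ℕ) (f : Fin n → M) (g : Fin n → N), x = ∑ i, f i ⊗ₜ[k] g i := by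
  induction x with
  | zero => exact ⟨0, ![], ![], by simp⟩
  | tmul m n => exact ⟨1, ![m], ![n], by simp⟩
  | add x y hx hy =>
    obtain ⟨n₁, f₁, g₁, rfl⟩ := hx
    obtain ⟨n₂, f₂, g₂, rfl⟩ := hy
    exact ⟨n₁ + n₂, Fin.append f₁ f₂, Fin.append g₁ g₂, by simp [Fin.sum_univ_add]⟩

theorem exists_fin_sum_tmul_of_le {n K : ℕ} (hnK : n ≤ K) (f : Fin n → M) (g : Fin n → N) :
    ∃ (f' : Fin K → M) (g' : Fin K → N), ∑ i, f i ⊗ₜ[k] g i = ∑ r, f' r ⊗ₜ[k] g' r := by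
  refine ⟨fun r => if h : (r : ℕ) < n then f ⟨r, h⟩ else 0,
    fun r => if h : (r : ℕ) < n then g ⟨r, h⟩ else 0,
    Fintype.sum_of_injective (Fin.castLE hnK) (Fin.castLE_injective hnK)
      (fun i => f i ⊗ₜ[k] g i) _ (fun r hr => ?_) (fun i => by simp)⟩
  have hr : ¬ (r : ℕ) < n := fun h => hr ⟨⟨r, h⟩, rfl⟩
  simp [hr]

theorem exists_uniform_fin_sum_tmul {n : ℕ} (x : Fin n → M ⊗[k] N) :
    ∃ (K : ℕ) (f : Fin n → Fin K → M) (g : Fin n → Fin K → N),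
      ∀ j, x j = ∑ r, f j r ⊗ₜ[k] g j r := by
  choose K f g hfg using fun j => exists_fin_sum_tmul (x j)
  choose f' g' hfg' using fun j =>
    exists_fin_sum_tmul_of_le (k := k) (Finset.le_sup (f := K) (Finset.mem_univ j)) (f j) (g j)
  exact ⟨_, f', g', fun j => (hfg j).trans (hfg' j)⟩

end TensorProduct

namespace WeakHopfAlgebra

variable {k H : Type*} [CommRing k] [Ring H] [Algebra k H] (W : WeakHopfAlgebra k H)
  {n : ℕ} {e1 e2 : Fin n → H}

theorem εt_eq_sum (he : W.comul 1 = ∑ j, e1 j ⊗ₜ[k] e2 j) (w : H) :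
    W.εt w = ∑ j, W.counit (e1 j * w) • e2 j := by
  simp [εt, he, Finset.sum_mul, Algebra.TensorProduct.tmul_mul_tmul]

theorem εs_eq_sum (he : W.comul 1 = ∑ j, e1 j ⊗ₜ[k] e2 j) (v : H) :
    W.εs v = ∑ j, W.counit (v * e2 j) • e1 j := by
  simp [εs, he, Finset.mul_sum, Algebra.TensorProduct.tmul_mul_tmul]

theorem rTensor_comul_comul_one_eq_sum_left (he : W.comul 1 = ∑ j, e1 j ⊗ₜ[k] e2 j) :
    rTensor H W.comul (W.comul 1)
      = ∑ j, ∑ j', (e1 j ⊗ₜ[k] (e2 j * e1 j')) ⊗ₜ[k] e2 j' := by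
  rw [W.comul_one_left, he]
  simp only [tmul_sum, sum_tmul, map_sum, TensorProduct.assoc_symm_tmul,
    Finset.sum_mul_sum, Algebra.TensorProduct.tmul_mul_tmul, one_mul, mul_one]

theorem rTensor_comul_comul_one_eq_sum_right (he : W.comul 1 = ∑ j, e1 j ⊗ₜ[k] e2 j) :
    rTensor H W.comul (W.comul 1)
      = ∑ j, ∑ j', (e1 j ⊗ₜ[k] (e1 j' * e2 j)) ⊗ₜ[k] e2 j' := by
  rw [W.comul_one_right, he]
  simp only [tmul_sum, sum_tmul, map_sum, TensorProduct.assoc_symm_tmul,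
    Finset.sum_mul_sum, Algebra.TensorProduct.tmul_mul_tmul, one_mul, mul_one]
  exact Finset.sum_comm

theorem sum_tmul_comul_eq_assoc_rTensor_comul (he : W.comul 1 = ∑ j, e1 j ⊗ₜ[k] e2 j) :
    ∑ j, e1 j ⊗ₜ[k] W.comul (e2 j)
      = TensorProduct.assoc k H H H (rTensor H W.comul (W.comul 1)) := by
  have coassoc := LinearMap.congr_fun W.comul_coassoc 1
  simp only [LinearMap.comp_apply, LinearEquiv.coe_coe] at coassoc
  rw [coassoc, he]
  simp

/-- Only the contraction `Σ ε(e₁ⱼ w) Yⱼ` of `Y` is determined, as the `e₁ⱼ` need not be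
independent. -/
theorem comul_εt_eq_sum (he : W.comul 1 = ∑ j, e1 j ⊗ₜ[k] e2 j) {Y : Fin n → H ⊗[k] H}
    (hY : ∑ j, e1 j ⊗ₜ[k] W.comul (e2 j) = ∑ j, e1 j ⊗ₜ[k] Y j) (w : H) :
    W.comul (W.εt w) = ∑ j, W.counit (e1 j * w) • Y j := by
  have := congrArg (TensorProduct.lid k (H ⊗[k] H) ∘ rTensor (H ⊗[k] H)
    (W.counit ∘ₗ LinearMap.mulRight k w)) hY
  simpa [W.εt_eq_sum he w] using this

theorem comul_εt_eq_tmul_one_mul (w : H) :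
    W.comul (W.εt w) = (W.εt w ⊗ₜ[k] (1 : H)) * W.comul 1 := by
  obtain ⟨n, e1, e2, he⟩ := exists_fin_sum_tmul (W.comul 1)
  rw [W.comul_εt_eq_sum he (Y := fun j => ∑ j', (e2 j * e1 j') ⊗ₜ[k] e2 j')
      (by simp [W.sum_tmul_comul_eq_assoc_rTensor_comul he,
        W.rTensor_comul_comul_one_eq_sum_left he, tmul_sum]),
    he, Finset.mul_sum]
  simp only [Finset.smul_sum, Algebra.TensorProduct.tmul_mul_tmul, one_mul, W.εt_eq_sum he w,
    Finset.sum_mul, sum_tmul, smul_tmul', smul_mul_assoc]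
  exact Finset.sum_comm

theorem comul_εt_eq_comul_one_mul (w : H) :
    W.comul (W.εt w) = W.comul 1 * (W.εt w ⊗ₜ[k] (1 : H)) := by
  obtain ⟨n, e1, e2, he⟩ := exists_fin_sum_tmul (W.comul 1)
  rw [W.comul_εt_eq_sum he (Y := fun j => ∑ j', (e1 j' * e2 j) ⊗ₜ[k] e2 j')
      (by simp [W.sum_tmul_comul_eq_assoc_rTensor_comul he,
        W.rTensor_comul_comul_one_eq_sum_right he, tmul_sum]),
    he, Finset.sum_mul]
  simp only [Finset.smul_sum, Algebra.TensorProduct.tmul_mul_tmul, mul_one, W.εt_eq_sum he w,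
    Finset.mul_sum, sum_tmul, smul_tmul', mul_smul_comm]
  exact Finset.sum_comm

theorem comul_εt_mul (w h : H) :
    W.comul (W.εt w * h) = (W.εt w ⊗ₜ[k] (1 : H)) * W.comul h := by
  rw [W.comul_mul, W.comul_εt_eq_tmul_one_mul, mul_assoc, ← W.comul_mul, one_mul]

theorem εt_mul_εs_comm (w v : H) : W.εt w * W.εs v = W.εs v * W.εt w := by
  obtain ⟨n, e1, e2, he⟩ := exists_fin_sum_tmul (W.comul 1)
  have hcontract := congrArg ((TensorProduct.rid k H).toLinearMap ∘ₗ TensorProduct.map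
      ((TensorProduct.lid k H).toLinearMap ∘ₗ
        rTensor H (W.counit ∘ₗ LinearMap.mulRight k w))
      (W.counit ∘ₗ LinearMap.mulLeft k v))
    ((W.rTensor_comul_comul_one_eq_sum_left he).symm.trans
      (W.rTensor_comul_comul_one_eq_sum_right he))
  simp only [map_sum, LinearMap.comp_apply, map_tmul, rTensor_tmul, LinearEquiv.coe_coe,
    lid_tmul, rid_tmul, LinearMap.mulRight_apply, LinearMap.mulLeft_apply] at hcontract
  rw [W.εt_eq_sum he w, W.εs_eq_sum he v, Finset.sum_mul_sum, Finset.sum_mul_sum]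
  conv_rhs => rw [Finset.sum_comm]
  simpa [smul_mul_assoc, mul_smul_comm, smul_smul, mul_comm] using hcontract

end WeakHopfAlgebra

section Pairing

variable {k H A M : Type*} [CommRing k] [Ring H] [Algebra k H]
  [AddCommGroup M] [Module k M]

noncomputable def coactionPairing [AddCommGroup A] [Module k A] (f : A ⊗[k] H →ₗ[k] M) :
    (H ⊗[k] A) ⊗[k] (H ⊗[k] H) →ₗ[k] H ⊗[k] M :=
  TensorProduct.map (LinearMap.mul' k H) f ∘ₗ
    (TensorProduct.tensorTensorTensorComm k H A H H).toLinearMap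

@[simp]
theorem coactionPairing_tmul [AddCommGroup A] [Module k A] (f : A ⊗[k] H →ₗ[k] M)
    (x : H) (b : A) (u v : H) :
    coactionPairing f ((x ⊗ₜ[k] b) ⊗ₜ[k] (u ⊗ₜ[k] v)) = (x * u) ⊗ₜ[k] f (b ⊗ₜ[k] v) := by
  simp [coactionPairing]

theorem coactionPairing_sum [AddCommGroup A] [Module k A] (f : A ⊗[k] H →ₗ[k] M)
    {m p : ℕ} (x : Fin m → H) (b : Fin m → A) (u v : Fin p → H) :
    coactionPairing f ((∑ i, x i ⊗ₜ[k] b i) ⊗ₜ[k] (∑ j, u j ⊗ₜ[k] v j))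
      = ∑ i, ∑ j, (x i * u j) ⊗ₜ[k] f (b i ⊗ₜ[k] v j) := by
  rw [sum_tmul]
  simp only [tmul_sum, map_sum, coactionPairing_tmul]

theorem coactionPairing_tmul_tmul_one_mul [Ring A] [Algebra k A] (f : A ⊗[k] H →ₗ[k] M)
    (z : H) (X : H ⊗[k] A) (Y : H ⊗[k] H) :
    coactionPairing f (X ⊗ₜ[k] ((z ⊗ₜ[k] (1 : H)) * Y))
      = coactionPairing f ((X * (z ⊗ₜ[k] (1 : A))) ⊗ₜ[k] Y) := by
  induction X using TensorProduct.induction_on with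
  | zero => simp
  | add X₁ X₂ h₁ h₂ => rw [add_mul, add_tmul, add_tmul, map_add, map_add, h₁, h₂]
  | tmul x b =>
    induction Y using TensorProduct.induction_on with
    | zero => simp
    | add Y₁ Y₂ h₁ h₂ => rw [mul_add, tmul_add, tmul_add, map_add, map_add, h₁, h₂]
    | tmul u v => simp [Algebra.TensorProduct.tmul_mul_tmul, mul_assoc]

end Pairing

section YetterDrinfeld

variable {k H A : Type*} [CommRing k] [Ring H] [Algebra k H] [Ring A] [Algebra k A]
  {act : H →ₗ[k] A →ₗ[k] A} {coact : A →ₗ[k] H ⊗[k] A}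

theorem map_mul_of_sum_tmul
    (hca_mul : ∀ (a b : A) (N N' : ℕ) (a1 : Fin N → H) (a0 : Fin N → A)
        (b1 : Fin N' → H) (b0 : Fin N' → A),
      coact a = ∑ i, a1 i ⊗ₜ[k] a0 i → coact b = ∑ j, b1 j ⊗ₜ[k] b0 j →
      coact (a * b) = ∑ i, ∑ j, (a1 i * b1 j) ⊗ₜ[k] (a0 i * b0 j))
    (x y : A) : coact (x * y) = coact x * coact y := by
  obtain ⟨p, x1, x0, hx⟩ := exists_fin_sum_tmul (coact x)
  obtain ⟨q, y1, y0, hy⟩ := exists_fin_sum_tmul (coact y)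
  rw [hca_mul x y p q x1 x0 y1 y0 hx hy, hx, hy, Finset.sum_mul_sum]
  simp [Algebra.TensorProduct.tmul_mul_tmul]

theorem sum_mul_tmul_one {m : ℕ} (x : Fin m → H) (b : Fin m → A) (u : H) :
    (∑ i, x i ⊗ₜ[k] b i) * (u ⊗ₜ[k] (1 : A)) = ∑ i, (x i * u) ⊗ₜ[k] b i := by
  simp [Finset.sum_mul, Algebra.TensorProduct.tmul_mul_tmul]

variable (W : WeakHopfAlgebra k H) {n : ℕ} {e1 e2 : Fin n → H}

/-- The Yetter–Drinfeld condition for `h = 1`, combined with `λ(b) = 1₁b⁽⁻¹⁾ ⊗ 1₂·b⁽⁰⁾`. -/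
theorem sum_coact_act_mul_tmul_one
    (hwyd1 : ∀ (a : A) (n N : ℕ) (e1 e2 : Fin n → H) (a1 : Fin N → H) (a0 : Fin N → A),
      W.comul 1 = ∑ j, e1 j ⊗ₜ[k] e2 j → coact a = ∑ i, a1 i ⊗ₜ[k] a0 i →
      coact a = ∑ i, ∑ j, (e1 j * a1 i) ⊗ₜ[k] act (e2 j) (a0 i))
    (hwyd2 : ∀ (h : H) (a : A) (n N K : ℕ) (h1 h2 : Fin n → H)
        (p1 : Fin n → Fin K → H) (p0 : Fin n → Fin K → A)
        (a1 : Fin N → H) (a0 : Fin N → A),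
      W.comul h = ∑ i, h1 i ⊗ₜ[k] h2 i →
      (∀ i, coact (act (h1 i) a) = ∑ r, p1 i r ⊗ₜ[k] p0 i r) →
      coact a = ∑ j, a1 j ⊗ₜ[k] a0 j →
      ∑ i, ∑ r, (p1 i r * h2 i) ⊗ₜ[k] p0 i r
        = ∑ i, ∑ j, (h1 i * a1 j) ⊗ₜ[k] act (h2 i) (a0 j))
    (he : W.comul 1 = ∑ j, e1 j ⊗ₜ[k] e2 j) (b : A) :
    ∑ j, coact (act (e1 j) b) * (e2 j ⊗ₜ[k] (1 : A)) = coact b := by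
  obtain ⟨N, b1, b0, hb⟩ := exists_fin_sum_tmul (coact b)
  obtain ⟨K, p1, p0, hp⟩ := exists_uniform_fin_sum_tmul fun j => coact (act (e1 j) b)
  calc ∑ j, coact (act (e1 j) b) * (e2 j ⊗ₜ[k] (1 : A))
      = ∑ j, ∑ r, (p1 j r * e2 j) ⊗ₜ[k] p0 j r := by simp only [hp, sum_mul_tmul_one]
    _ = ∑ i, ∑ j, (e1 i * b1 j) ⊗ₜ[k] act (e2 i) (b0 j) :=
        hwyd2 1 b n N K e1 e2 p1 p0 b1 b0 he hp hb
    _ = coact b := by rw [hwyd1 b n N e1 e2 b1 b0 he hb, Finset.sum_comm]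

theorem coact_act_εt_one
    (hact_mul : ∀ (h h' : H) (a : A), act (h * h') a = act h (act h' a))
    (hca_one : coact (1 : A) = (LinearMap.rTensor A W.εs) (coact 1))
    (hwyd1 : ∀ (a : A) (n N : ℕ) (e1 e2 : Fin n → H) (a1 : Fin N → H) (a0 : Fin N → A),
      W.comul 1 = ∑ j, e1 j ⊗ₜ[k] e2 j → coact a = ∑ i, a1 i ⊗ₜ[k] a0 i →
      coact a = ∑ i, ∑ j, (e1 j * a1 i) ⊗ₜ[k] act (e2 j) (a0 i))
    (hwyd2 : ∀ (h : H) (a : A) (n N K : ℕ) (h1 h2 : Fin n → H)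
        (p1 : Fin n → Fin K → H) (p0 : Fin n → Fin K → A)
        (a1 : Fin N → H) (a0 : Fin N → A),
      W.comul h = ∑ i, h1 i ⊗ₜ[k] h2 i →
      (∀ i, coact (act (h1 i) a) = ∑ r, p1 i r ⊗ₜ[k] p0 i r) →
      coact a = ∑ j, a1 j ⊗ₜ[k] a0 j →
      ∑ i, ∑ r, (p1 i r * h2 i) ⊗ₜ[k] p0 i r
        = ∑ i, ∑ j, (h1 i * a1 j) ⊗ₜ[k] act (h2 i) (a0 j))
    (w : H) :
    coact (act (W.εt w) 1) = coact 1 * (W.εt w ⊗ₜ[k] (1 : A)) := by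
  obtain ⟨n, e1, e2, he⟩ := exists_fin_sum_tmul (W.comul 1)
  obtain ⟨N, m1, m0, hm⟩ := exists_fin_sum_tmul (coact (1 : A))
  have hm_εs : coact (1 : A) = ∑ i, W.εs (m1 i) ⊗ₜ[k] m0 i := by
    rw [hca_one, hm]
    simp
  have hz : W.comul (W.εt w) = ∑ j, (e1 j * W.εt w) ⊗ₜ[k] e2 j := by
    rw [W.comul_εt_eq_comul_one_mul, he, sum_mul_tmul_one]
  obtain ⟨K, q1, q0, hq⟩ :=
    exists_uniform_fin_sum_tmul fun j => coact (act (e1 j * W.εt w) (1 : A))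
  calc coact (act (W.εt w) 1)
      = ∑ j, coact (act (e1 j * W.εt w) 1) * (e2 j ⊗ₜ[k] (1 : A)) := by
        simp only [hact_mul, sum_coact_act_mul_tmul_one W hwyd1 hwyd2 he]
    _ = ∑ i, ∑ r, (q1 i r * e2 i) ⊗ₜ[k] q0 i r := by simp only [hq, sum_mul_tmul_one]
    _ = ∑ i, ∑ j, (e1 i * W.εt w * W.εs (m1 j)) ⊗ₜ[k] act (e2 i) (m0 j) :=
        hwyd2 (W.εt w) 1 n N K (fun j => e1 j * W.εt w) e2 q1 q0 _ m0 hz hq hm_εs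
    _ = (∑ i, ∑ j, (e1 i * W.εs (m1 j)) ⊗ₜ[k] act (e2 i) (m0 j))
          * (W.εt w ⊗ₜ[k] (1 : A)) := by
        simp only [Finset.sum_mul, Algebra.TensorProduct.tmul_mul_tmul, mul_one, mul_assoc,
          W.εt_mul_εs_comm]
    _ = coact 1 * (W.εt w ⊗ₜ[k] (1 : A)) := by
        rw [hwyd1 1 n N e1 e2 _ m0 he hm_εs, Finset.sum_comm]

end YetterDrinfeld

open WeakHopfAlgebra in
theorem weakHopf_smash_left_coaction_well_defined_general
    {k H : Type*} [CommRing k] [Ring H] [Algebra k H]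
    (W : WeakHopfAlgebra k H) {A : Type*} [Ring A] [Algebra k A]
    (act : H →ₗ[k] A →ₗ[k] A) (coact : A →ₗ[k] H ⊗[k] A)
    -- `A` is a left `H`-module algebra:
    (hact_mul : ∀ (h h' : H) (a : A), act (h * h') a = act h (act h' a))
    -- `A` is a left `H`-comodule algebra:
    (hca_mul : ∀ (a b : A) (N N' : ℕ) (a1 : Fin N → H) (a0 : Fin N → A)
        (b1 : Fin N' → H) (b0 : Fin N' → A),
      coact a = ∑ i, a1 i ⊗ₜ[k] a0 i → coact b = ∑ j, b1 j ⊗ₜ[k] b0 j →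
      coact (a * b) = ∑ i, ∑ j, (a1 i * b1 j) ⊗ₜ[k] (a0 i * b0 j))
    (hca_one : coact (1 : A) = (LinearMap.rTensor A W.εs) (coact 1))
    -- `(A, act, coact)` is a left-left Yetter–Drinfeld module:
    (hwyd1 : ∀ (a : A) (n N : ℕ) (e1 e2 : Fin n → H) (a1 : Fin N → H) (a0 : Fin N → A),
      W.comul 1 = ∑ j, e1 j ⊗ₜ[k] e2 j → coact a = ∑ i, a1 i ⊗ₜ[k] a0 i →
      coact a = ∑ i, ∑ j, (e1 j * a1 i) ⊗ₜ[k] act (e2 j) (a0 i))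
    (hwyd2 : ∀ (h : H) (a : A) (n N K : ℕ) (h1 h2 : Fin n → H)
        (p1 : Fin n → Fin K → H) (p0 : Fin n → Fin K → A)
        (a1 : Fin N → H) (a0 : Fin N → A),
      W.comul h = ∑ i, h1 i ⊗ₜ[k] h2 i →
      (∀ i, coact (act (h1 i) a) = ∑ r, p1 i r ⊗ₜ[k] p0 i r) →
      coact a = ∑ j, a1 j ⊗ₜ[k] a0 j →
      ∑ i, ∑ r, (p1 i r * h2 i) ⊗ₜ[k] p0 i r
        = ∑ i, ∑ j, (h1 i * a1 j) ⊗ₜ[k] act (h2 i) (a0 j)) :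
    -- conclusion: `λ(a # zh) = λ(a(z·1_A) # h)` for `z ∈ H_t`:
    ∀ (a : A) (h z : H), z ∈ Set.range W.εt →
      ∀ (N n N' n' : ℕ) (a1 : Fin N → H) (a0 : Fin N → A) (u1 u2 : Fin n → H)
        (c1 : Fin N' → H) (c0 : Fin N' → A) (h1 h2 : Fin n' → H),
      coact a = ∑ i, a1 i ⊗ₜ[k] a0 i →
      W.comul (z * h) = ∑ j, u1 j ⊗ₜ[k] u2 j →
      coact (a * act z 1) = ∑ i, c1 i ⊗ₜ[k] c0 i →
      W.comul h = ∑ j, h1 j ⊗ₜ[k] h2 j →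
      (∑ i, ∑ j, (a1 i * u1 j) ⊗ₜ[k]
          (W.smashRel (LinearMap.mul k A) (1 : A) act).mkQ (a0 i ⊗ₜ[k] u2 j))
        = ∑ i, ∑ j, (c1 i * h1 j) ⊗ₜ[k]
          (W.smashRel (LinearMap.mul k A) (1 : A) act).mkQ (c0 i ⊗ₜ[k] h2 j) := by
  rintro a h _ ⟨w, rfl⟩ N n N' n' a1 a0 u1 u2 c1 c0 h1 h2 ha hzh hc hh
  set Ψ := coactionPairing (W.smashRel (LinearMap.mul k A) (1 : A) act).mkQ
  have coact_mul := map_mul_of_sum_tmul hca_mul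
  have coact_mul_act_εt : coact (a * act (W.εt w) 1) = coact a * (W.εt w ⊗ₜ[k] (1 : A)) := by
    rw [coact_mul, coact_act_εt_one W hact_mul hca_one hwyd1 hwyd2, ← mul_assoc, ← coact_mul,
      mul_one]
  calc _ = Ψ (coact a ⊗ₜ[k] W.comul (W.εt w * h)) := by rw [ha, hzh, coactionPairing_sum]
    _ = Ψ (coact (a * act (W.εt w) 1) ⊗ₜ[k] W.comul h) := by
        rw [W.comul_εt_mul, coactionPairing_tmul_tmul_one_mul, coact_mul_act_εt]
    _ = _ := by rw [hc, hh, coactionPairing_sum]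

open WeakHopfAlgebra in
/-- Let `H` be a weak Hopf algebra and `A` a left-left Yetter–Drinfeld module over `H` which is
simultaneously a left `H`-module algebra and a left `H`-comodule algebra.  Then on the smash
product `A # H = A ⊗_{H_t} H` the map `λ(a # h) = a⁽⁻¹⁾h₁ ⊗ (a⁽⁰⁾ # h₂)` is well defined,
i.e. `λ(a # zh) = λ(a(z·1_A) # h)` for all `z ∈ H_t`. -/
theorem weakHopf_smash_left_coaction_well_defined
    {k H : Type*} [CommRing k] [Ring H] [Algebra k H]
    (W : WeakHopfAlgebra k H) {A : Type*} [Ring A] [Algebra k A]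
    (act : H →ₗ[k] A →ₗ[k] A) (coact : A →ₗ[k] H ⊗[k] A)
    -- `A` is a left `H`-module algebra:
    (hact_mul : ∀ (h h' : H) (a : A), act (h * h') a = act h (act h' a))
    (hact_one : ∀ a : A, act 1 a = a)
    (hma_mul : ∀ (h : H) (a b : A) (n : ℕ) (h1 h2 : Fin n → H),
      W.comul h = ∑ i, h1 i ⊗ₜ[k] h2 i →
      act h (a * b) = ∑ i, act (h1 i) a * act (h2 i) b)
    (hma_one : ∀ h : H, act h 1 = act (W.εt h) 1)
    -- `A` is a left `H`-comodule:
    (hcoassoc : (LinearMap.lTensor H coact) ∘ₗ coact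
      = (TensorProduct.assoc k H H A).toLinearMap ∘ₗ (LinearMap.rTensor A W.comul) ∘ₗ coact)
    (hcounit : (TensorProduct.lid k A).toLinearMap ∘ₗ (LinearMap.rTensor A W.counit) ∘ₗ coact
      = LinearMap.id)
    -- `A` is a left `H`-comodule algebra:
    (hca_mul : ∀ (a b : A) (N N' : ℕ) (a1 : Fin N → H) (a0 : Fin N → A)
        (b1 : Fin N' → H) (b0 : Fin N' → A),
      coact a = ∑ i, a1 i ⊗ₜ[k] a0 i → coact b = ∑ j, b1 j ⊗ₜ[k] b0 j →
      coact (a * b) = ∑ i, ∑ j, (a1 i * b1 j) ⊗ₜ[k] (a0 i * b0 j))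
    (hca_one : coact (1 : A) = (LinearMap.rTensor A W.εs) (coact 1))
    -- `(A, act, coact)` is a left-left Yetter–Drinfeld module:
    (hwyd1 : ∀ (a : A) (n N : ℕ) (e1 e2 : Fin n → H) (a1 : Fin N → H) (a0 : Fin N → A),
      W.comul 1 = ∑ j, e1 j ⊗ₜ[k] e2 j → coact a = ∑ i, a1 i ⊗ₜ[k] a0 i →
      coact a = ∑ i, ∑ j, (e1 j * a1 i) ⊗ₜ[k] act (e2 j) (a0 i))
    (hwyd2 : ∀ (h : H) (a : A) (n N K : ℕ) (h1 h2 : Fin n → H)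
        (p1 : Fin n → Fin K → H) (p0 : Fin n → Fin K → A)
        (a1 : Fin N → H) (a0 : Fin N → A),
      W.comul h = ∑ i, h1 i ⊗ₜ[k] h2 i →
      (∀ i, coact (act (h1 i) a) = ∑ r, p1 i r ⊗ₜ[k] p0 i r) →
      coact a = ∑ j, a1 j ⊗ₜ[k] a0 j →
      ∑ i, ∑ r, (p1 i r * h2 i) ⊗ₜ[k] p0 i r
        = ∑ i, ∑ j, (h1 i * a1 j) ⊗ₜ[k] act (h2 i) (a0 j)) :
    -- conclusion: `λ(a # zh) = λ(a(z·1_A) # h)` for `z ∈ H_t`: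
    ∀ (a : A) (h z : H), z ∈ Set.range W.εt →
      ∀ (N n N' n' : ℕ) (a1 : Fin N → H) (a0 : Fin N → A) (u1 u2 : Fin n → H)
        (c1 : Fin N' → H) (c0 : Fin N' → A) (h1 h2 : Fin n' → H),
      coact a = ∑ i, a1 i ⊗ₜ[k] a0 i →
      W.comul (z * h) = ∑ j, u1 j ⊗ₜ[k] u2 j →
      coact (a * act z 1) = ∑ i, c1 i ⊗ₜ[k] c0 i →
      W.comul h = ∑ j, h1 j ⊗ₜ[k] h2 j →
      (∑ i, ∑ j, (a1 i * u1 j) ⊗ₜ[k]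
          (W.smashRel (LinearMap.mul k A) (1 : A) act).mkQ (a0 i ⊗ₜ[k] u2 j))
        = ∑ i, ∑ j, (c1 i * h1 j) ⊗ₜ[k]
          (W.smashRel (LinearMap.mul k A) (1 : A) act).mkQ (c0 i ⊗ₜ[k] h2 j) :=
  weakHopf_smash_left_coaction_well_defined_general W act coact hact_mul hca_mul hca_one hwyd1 hwyd2
end

section
/- Let H be a weak Hopf algebra with bijective antipode, B an H-bicomodule algebra with a morphism of H-bicomodule algebras v : H → B, and A = B^{co(H)} = {b ∈ B : ρ_B(b) = b₍₀₎ ⊗ ε_t(b₍₁₎)} the coinvariants with H-action h▷a = E(v(h)a) where E(b) = b₍₀₎ v(S(b₍₁₎)). Then A is a left H-comodule algebra (with coaction and multiplication restricted from B) and the map φ : A # H → B, φ(a # h) = a v(h), is an isomorphism of H-bicomodule algebras. -/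
open TensorProduct LinearMap

namespace WeakHopfAlgebra

variable {k H : Type*} [CommRing k] [Ring H] [Algebra k H]

/-- The coinvariants `B^{co(H)} = {b ∈ B : ρ_B(b) = b₍₀₎ ⊗ ε_t(b₍₁₎)}` of a right
`H`-comodule algebra `B`. -/
def coinvariants (W : WeakHopfAlgebra k H) {B : Type*} [Ring B] [Algebra k B]
    (rhoB : B →ₗ[k] B ⊗[k] H) : Submodule k B where
  carrier := {b | rhoB b = (LinearMap.lTensor B W.εt) (rhoB b)}
  add_mem' := by
    intro a b ha hb
    simp only [Set.mem_setOf_eq] at *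
    rw [map_add, map_add, ← ha, ← hb]
  zero_mem' := by simp
  smul_mem' := by
    intro c x hx
    simp only [Set.mem_setOf_eq] at *
    rw [map_smul, map_smul, ← hx]

/-- The projection `E(b) = b₍₀₎ v(S(b₍₁₎))` onto the coinvariants. -/
noncomputable def Emap (W : WeakHopfAlgebra k H) {B : Type*} [Ring B] [Algebra k B]
    (rhoB : B →ₗ[k] B ⊗[k] H) (v : H →ₐ[k] B) : B →ₗ[k] B :=
  LinearMap.mul' k B ∘ₗ (LinearMap.lTensor B (v.toLinearMap ∘ₗ W.antipode)) ∘ₗ rhoB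

end WeakHopfAlgebra


/-!
Linear maps from `H` to an algebra form an algebra under convolution, and `v ∘ S` is a two-sided
convolution inverse of `v`: `v(h₁) v(S h₂) = v(ε_t h)` and `v(S h₁) v(h₂) = v(ε_s h)`, and the
unitality `λ(1) = 1 ⊗ 1`, `ρ(1) = 1 ⊗ 1` of the coactions forces `v ∘ ε_t = v ∘ ε_s = ε(-) 1`.
The same unitality gives `ε(xy) 1 = ε(x) ε(y) 1` in `B`, so that over the coalgebra `H ⊗ H` both
`x ⊗ y ↦ v(S(xy))` and `x ⊗ y ↦ v(S y) v(S x)` are convolution inverses of `x ⊗ y ↦ v(xy)`; hence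
`v ∘ S` is antimultiplicative.

With these facts `E(b) = b₍₀₎ v(S b₍₁₎)` is a left `A`-linear projection of `B` onto the
coinvariants `A`, and `b ↦ [E(b₍₀₎) ⊗ b₍₁₎]` inverts `φ(a # h) = a v(h)`, because
`E(b₍₀₎) v(b₍₁₎) = b₍₀₎ v(S b₍₁₎) v(b₍₂₎) = b₍₀₎ ε(b₍₁₎) = b`. The multiplication and the coactions
of `A # H` are transported from `B` along `φ`; the smash product formulas for them come down to
`(h₁ ▷ a) v(h₂) = v(h) a`.
-/

namespace WeakHopfAlgebra

variable {k H : Type*} [CommRing k] [Ring H] [Algebra k H] (W : WeakHopfAlgebra k H)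

section Counit

variable {h : H} {ι : Type*} {s : Finset ι} {x y : ι → H}

theorem sum_counit_smul_right (hrep : W.comul h = ∑ i ∈ s, x i ⊗ₜ[k] y i) :
    ∑ i ∈ s, W.counit (x i) • y i = h := by
  have := LinearMap.congr_fun W.counit_comul h
  simpa [hrep, map_sum] using this

theorem sum_counit_smul_left (hrep : W.comul h = ∑ i ∈ s, x i ⊗ₜ[k] y i) :
    ∑ i ∈ s, W.counit (y i) • x i = h := by
  have := LinearMap.congr_fun W.comul_counit h
  simpa [hrep, map_sum] using this

theorem comul_mul_eq_sum {h' : H} {κ : Type*} {t : Finset κ} {x' y' : κ → H}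
    (hrep : W.comul h = ∑ i ∈ s, x i ⊗ₜ[k] y i) (hrep' : W.comul h' = ∑ j ∈ t, x' j ⊗ₜ[k] y' j) :
    W.comul (h * h') = ∑ p ∈ s ×ˢ t, (x p.1 * x' p.2) ⊗ₜ[k] (y p.1 * y' p.2) := by
  simp only [W.comul_mul, hrep, hrep', Finset.sum_mul_sum, Finset.sum_product,
    Algebra.TensorProduct.tmul_mul_tmul]

end Counit

section Target

variable (h : H) {ι : Type*} {s : Finset ι} {e f : ι → H}

theorem εt_eq_sum_s14 (hrep : W.comul 1 = ∑ i ∈ s, e i ⊗ₜ[k] f i) :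
    W.εt h = ∑ i ∈ s, W.counit (e i * h) • f i := by
  simp [εt, hrep, Finset.sum_mul, Algebra.TensorProduct.tmul_mul_tmul, map_sum]

theorem εs_eq_sum_s14 (hrep : W.comul 1 = ∑ i ∈ s, e i ⊗ₜ[k] f i) :
    W.εs h = ∑ i ∈ s, W.counit (h * f i) • e i := by
  simp [εs, hrep, Finset.mul_sum, Algebra.TensorProduct.tmul_mul_tmul, map_sum]

theorem sum_mul_antipode_eq_εt {x y : ι → H} (hrep : W.comul h = ∑ i ∈ s, x i ⊗ₜ[k] y i) :
    ∑ i ∈ s, x i * W.antipode (y i) = W.εt h := by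
  obtain ⟨t, ht⟩ := TensorProduct.exists_finset (W.comul 1)
  have := W.antipode_right h
  rw [hrep, ht] at this
  simpa [W.εt_eq_sum_s14 h ht, map_sum] using this

theorem sum_antipode_mul_eq_εs {x y : ι → H} (hrep : W.comul h = ∑ i ∈ s, x i ⊗ₜ[k] y i) :
    ∑ i ∈ s, W.antipode (x i) * y i = W.εs h := by
  obtain ⟨t, ht⟩ := TensorProduct.exists_finset (W.comul 1)
  have := W.antipode_left h
  rw [hrep, ht] at this
  simpa [W.εs_eq_sum_s14 h ht, map_sum] using this

theorem counit_εt : W.counit (W.εt h) = W.counit h := by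
  obtain ⟨s, hs⟩ := TensorProduct.exists_finset (W.comul 1)
  have := W.counit_mul_right 1 1 h
  simp only [mul_one, one_mul, hs] at this
  simp [W.εt_eq_sum_s14 h hs, map_sum, this, mul_comm]

theorem counit_εs_mul (h' : H) : W.counit (W.εs h * h') = W.counit (h * h') := by
  obtain ⟨s, hs⟩ := TensorProduct.exists_finset (W.comul 1)
  have := W.counit_mul_right h 1 h'
  simp only [mul_one, hs] at this
  simp [W.εs_eq_sum_s14 h hs, Finset.sum_mul, map_sum, this, mul_comm]

theorem εs_εs_mul (h' : H) : W.εs (W.εs h * h') = W.εs (h * h') := by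
  obtain ⟨s, hs⟩ := TensorProduct.exists_finset (W.comul 1)
  simp only [W.εs_eq_sum_s14 (_ * h') hs, mul_assoc, W.counit_εs_mul h]

theorem εt_one : W.εt 1 = 1 := by
  obtain ⟨s, hs⟩ := TensorProduct.exists_finset (W.comul 1)
  simpa [W.εt_eq_sum_s14 1 hs] using W.sum_counit_smul_right hs

theorem εs_one : W.εs 1 = 1 := by
  obtain ⟨s, hs⟩ := TensorProduct.exists_finset (W.comul 1)
  simpa [W.εs_eq_sum_s14 1 hs] using W.sum_counit_smul_left hs

end Target

section Convolution

open WithConv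

abbrev toCoalgebra : Coalgebra k H where
  comul := W.comul
  counit := W.counit
  coassoc := W.comul_coassoc
  rTensor_counit_comp_comul := LinearMap.ext fun h => (TensorProduct.lid k H).injective <| by
    simpa using LinearMap.congr_fun W.counit_comul h
  lTensor_counit_comp_comul := LinearMap.ext fun h => (TensorProduct.rid k H).injective <| by
    simpa using LinearMap.congr_fun W.comul_counit h

variable {M : Type*} [Ring M] [Algebra k M]

noncomputable def conv (f g : H →ₗ[k] M) : H →ₗ[k] M :=
  LinearMap.mul' k M ∘ₗ TensorProduct.map f g ∘ₗ W.comul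

noncomputable def convOne : H →ₗ[k] M := Algebra.linearMap k M ∘ₗ W.counit

theorem conv_assoc (f g p : H →ₗ[k] M) : W.conv (W.conv f g) p = W.conv f (W.conv g p) := by
  let _ := W.toCoalgebra
  exact congrArg ofConv (mul_assoc (toConv f) (toConv g) (toConv p))

theorem conv_convOne (f : H →ₗ[k] M) : W.conv f W.convOne = f := by
  let _ := W.toCoalgebra
  exact congrArg ofConv (mul_one (toConv f))

theorem convOne_apply (h : H) : (W.convOne : H →ₗ[k] M) h = W.counit h • 1 :=
  Algebra.algebraMap_eq_smul_one _

theorem conv_eq_sum (f g : H →ₗ[k] M) {h : H} {ι : Type*} {s : Finset ι} {x y : ι → H}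
    (hrep : W.comul h = ∑ i ∈ s, x i ⊗ₜ[k] y i) : W.conv f g h = ∑ i ∈ s, f (x i) * g (y i) := by
  simp [conv, hrep, map_sum]

theorem conv_mulRight_comp (f g : H →ₗ[k] M) (c : M) :
    W.conv f (mulRight k c ∘ₗ g) = mulRight k c ∘ₗ W.conv f g := by
  ext h
  obtain ⟨s, hs⟩ := TensorProduct.exists_finset (W.comul h)
  simp [W.conv_eq_sum _ _ hs, mul_assoc]

theorem conv_lTensor (f g : H →ₗ[k] M) :
    W.conv (lTensor H f ∘ₗ W.comul) (TensorProduct.mk k H M 1 ∘ₗ g)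
      = lTensor H (W.conv f g) ∘ₗ W.comul := by
  ext h
  obtain ⟨s, hs⟩ := TensorProduct.exists_finset (W.comul h)
  set Φ := lTensor H (LinearMap.mul' k M ∘ₗ TensorProduct.map f g)
  have hΦ (u : H ⊗[k] H) (y : H) :
      Φ (TensorProduct.assoc k H H H (u ⊗ₜ y)) = lTensor H f u * (1 ⊗ₜ g y) := by
    induction u using TensorProduct.induction_on with
    | zero => simp
    | tmul a b => simp [Φ, Algebra.TensorProduct.tmul_mul_tmul]
    | add u u' hu hu' => simp only [TensorProduct.add_tmul, map_add, add_mul, hu, hu']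
  have hcoassoc := LinearMap.congr_fun W.comul_coassoc h
  simp only [coe_comp, Function.comp_apply, LinearEquiv.coe_coe, hs, map_sum, rTensor_tmul,
    lTensor_tmul] at hcoassoc
  calc W.conv (lTensor H f ∘ₗ W.comul) (TensorProduct.mk k H M 1 ∘ₗ g) h
      = Φ (∑ i ∈ s, TensorProduct.assoc k H H H (W.comul i.1 ⊗ₜ i.2)) := by
        simp [W.conv_eq_sum _ _ hs, map_sum, hΦ]
    _ = lTensor H (W.conv f g) (W.comul h) := by
        rw [hcoassoc, hs]
        simp [Φ, map_sum, conv]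

theorem conv_rTensor (f g : H →ₗ[k] M) :
    W.conv ((TensorProduct.mk k M H).flip 1 ∘ₗ f) (rTensor H g ∘ₗ W.comul)
      = rTensor H (W.conv f g) ∘ₗ W.comul := by
  ext h
  obtain ⟨s, hs⟩ := TensorProduct.exists_finset (W.comul h)
  set Φ := rTensor H (LinearMap.mul' k M ∘ₗ TensorProduct.map f g)
  have hΦ (x : H) (u : H ⊗[k] H) :
      Φ ((TensorProduct.assoc k H H H).symm (x ⊗ₜ u)) = (f x ⊗ₜ 1) * rTensor H g u := by
    induction u using TensorProduct.induction_on with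
    | zero => simp
    | tmul a b => simp [Φ, Algebra.TensorProduct.tmul_mul_tmul]
    | add u u' hu hu' => simp only [TensorProduct.tmul_add, map_add, mul_add, hu, hu']
  have hcoassoc := LinearMap.congr_fun W.comul_coassoc h
  simp only [coe_comp, Function.comp_apply, LinearEquiv.coe_coe, hs, map_sum, rTensor_tmul,
    lTensor_tmul] at hcoassoc
  calc W.conv ((TensorProduct.mk k M H).flip 1 ∘ₗ f) (rTensor H g ∘ₗ W.comul) h
      = Φ (∑ i ∈ s, (TensorProduct.assoc k H H H).symm (i.1 ⊗ₜ W.comul i.2)) := by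
        simp [W.conv_eq_sum _ _ hs, map_sum, hΦ]
    _ = rTensor H (W.conv f g) (W.comul h) := by
        rw [← map_sum, ← hcoassoc, hs]
        simp [Φ, map_sum, conv]

theorem comp_conv {N : Type*} [Ring N] [Algebra k N] (χ : M →ₐ[k] N) (f g : H →ₗ[k] M) :
    χ.toLinearMap ∘ₗ W.conv f g = W.conv (χ.toLinearMap ∘ₗ f) (χ.toLinearMap ∘ₗ g) := by
  let _ := W.toCoalgebra
  exact LinearMap.algHom_comp_convMul_distrib χ (toConv f) (toConv g)

theorem algHom_comp_convOne {N : Type*} [Ring N] [Algebra k N] (χ : M →ₐ[k] N) :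
    χ.toLinearMap ∘ₗ (W.convOne : H →ₗ[k] M) = W.convOne := by
  ext h
  simp [convOne_apply]

end Convolution

variable {B : Type*} [Ring B] [Algebra k B]

structure IsBicomoduleAlgebraHom (lamB : B →ₗ[k] H ⊗[k] B) (rhoB : B →ₗ[k] B ⊗[k] H)
    (v : H →ₐ[k] B) : Prop where
  rho_mul : ∀ b b' : B, rhoB (b * b') = rhoB b * rhoB b'
  rho_one : rhoB 1 = 1
  rho_counit : ∀ b, TensorProduct.rid k B (lTensor B W.counit (rhoB b)) = b
  rho_coassoc : ∀ b, TensorProduct.assoc k B H H (rTensor H rhoB (rhoB b))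
      = lTensor B W.comul (rhoB b)
  rho_weak : ∀ b : B, rhoB 1 * (b ⊗ₜ[k] (1 : H)) = lTensor B W.εt (rhoB b)
  lam_mul : ∀ b b' : B, lamB (b * b') = lamB b * lamB b'
  lam_one : lamB 1 = 1
  lam_counit : ∀ b, TensorProduct.lid k B (rTensor B W.counit (lamB b)) = b
  lam_coassoc : ∀ b, lTensor H lamB (lamB b)
      = TensorProduct.assoc k H H B (rTensor B W.comul (lamB b))
  lam_weak : ∀ b : B, ((1 : H) ⊗ₜ[k] b) * lamB 1 = rTensor B W.εs (lamB b)
  lam_rho_comm : ∀ b, TensorProduct.assoc k H B H (rTensor H lamB (rhoB b))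
      = lTensor H rhoB (lamB b)
  rho_v : ∀ h, rhoB (v h) = rTensor H v.toLinearMap (W.comul h)
  lam_v : ∀ h, lamB (v h) = lTensor H v.toLinearMap (W.comul h)

theorem Emap_eq (rhoB : B →ₗ[k] B ⊗[k] H) (v : H →ₐ[k] B) : W.Emap rhoB v
    = LinearMap.mul' k B ∘ₗ TensorProduct.map LinearMap.id (v.toLinearMap ∘ₗ W.antipode) ∘ₗ rhoB :=
  rfl

noncomputable def coinvMulV (rhoB : B →ₗ[k] B ⊗[k] H) (v : H →ₐ[k] B) :
    W.coinvariants rhoB ⊗[k] H →ₗ[k] B :=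
  LinearMap.mul' k B ∘ₗ TensorProduct.map (W.coinvariants rhoB).subtype v.toLinearMap

theorem coinvMulV_tmul {rhoB : B →ₗ[k] B ⊗[k] H} {v : H →ₐ[k] B} (a : W.coinvariants rhoB)
    (h : H) : W.coinvMulV rhoB v (a ⊗ₜ h) = a * v h := rfl

/-- Made a local instance below: the quotient `(A ⊗ H) ⧸ smashRel` only elaborates when the additive
monoid of `A ⊗ H` is the one underlying this group structure, not `Submodule.addCommMonoid`. -/
abbrev coinvariantsAddCommGroup (rhoB : B →ₗ[k] B ⊗[k] H) :
    AddCommGroup (W.coinvariants rhoB) :=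
  Submodule.addCommGroup _

namespace IsBicomoduleAlgebraHom

variable {W} {lamB : B →ₗ[k] H ⊗[k] B} {rhoB : B →ₗ[k] B ⊗[k] H} {v : H →ₐ[k] B}
variable (hv : W.IsBicomoduleAlgebraHom lamB rhoB v)
include hv

noncomputable def rhoAlgHom : B →ₐ[k] B ⊗[k] H :=
  AlgHom.ofLinearMap rhoB hv.rho_one hv.rho_mul

theorem lam_comp_v : lamB ∘ₗ v.toLinearMap = lTensor H v.toLinearMap ∘ₗ W.comul :=
  LinearMap.ext hv.lam_v

theorem rho_comp_v : rhoB ∘ₗ v.toLinearMap = rTensor H v.toLinearMap ∘ₗ W.comul :=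
  LinearMap.ext hv.rho_v

theorem lTensor_v_comul_one : lTensor H v.toLinearMap (W.comul 1) = 1 := by
  rw [← hv.lam_v, map_one, hv.lam_one]

theorem rTensor_v_comul_one : rTensor H v.toLinearMap (W.comul 1) = 1 := by
  rw [← hv.rho_v, map_one, hv.rho_one]

theorem v_εt (h : H) : v (W.εt h) = W.counit h • 1 := by
  obtain ⟨s, hs⟩ := TensorProduct.exists_finset (W.comul 1)
  have := congrArg (TensorProduct.lid k B ∘ rTensor B (W.counit ∘ₗ mulRight k h))
    hv.lTensor_v_comul_one
  simpa [hs, map_sum, W.εt_eq_sum_s14 h hs, Algebra.TensorProduct.one_def] using this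

theorem v_εs (h : H) : v (W.εs h) = W.counit h • 1 := by
  obtain ⟨s, hs⟩ := TensorProduct.exists_finset (W.comul 1)
  have := congrArg (TensorProduct.rid k B ∘ lTensor B (W.counit ∘ₗ mulLeft k h))
    hv.rTensor_v_comul_one
  simpa [hs, map_sum, W.εs_eq_sum_s14 h hs, Algebra.TensorProduct.one_def] using this

theorem conv_v_vAntipode : W.conv v.toLinearMap (v.toLinearMap ∘ₗ W.antipode) = W.convOne := by
  ext h
  obtain ⟨s, hs⟩ := TensorProduct.exists_finset (W.comul h)
  simp [W.conv_eq_sum _ _ hs, convOne_apply, ← map_mul, ← map_sum,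
    W.sum_mul_antipode_eq_εt h hs, hv.v_εt]

theorem conv_vAntipode_v : W.conv (v.toLinearMap ∘ₗ W.antipode) v.toLinearMap = W.convOne := by
  ext h
  obtain ⟨s, hs⟩ := TensorProduct.exists_finset (W.comul h)
  simp [W.conv_eq_sum _ _ hs, convOne_apply, ← map_mul, ← map_sum,
    W.sum_antipode_mul_eq_εs h hs, hv.v_εs]

theorem sum_v_mul_vAntipode {h : H} {ι : Type*} {s : Finset ι} {x y : ι → H}
    (hrep : W.comul h = ∑ i ∈ s, x i ⊗ₜ[k] y i) :
    ∑ i ∈ s, v (x i) * v (W.antipode (y i)) = W.counit h • 1 := by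
  simpa [W.conv_eq_sum _ _ hrep, convOne_apply] using
    LinearMap.congr_fun hv.conv_v_vAntipode h

theorem εs_tmul_one (h : H) : W.εs h ⊗ₜ[k] (1 : B) = W.counit h • (1 : H ⊗[k] B) := by
  obtain ⟨s, hs⟩ := TensorProduct.exists_finset (W.comul h)
  have hweak (x : H) : rTensor B W.εs (lamB (v x)) = 1 ⊗ₜ v x := by
    rw [← hv.lam_weak, hv.lam_one, mul_one]
  have hmul (X : H ⊗[k] B) (c : B) :
      rTensor B W.εs X * (1 ⊗ₜ c) = rTensor B W.εs (X * (1 ⊗ₜ c)) := by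
    induction X using TensorProduct.induction_on with
    | zero => simp
    | tmul z b => simp [Algebra.TensorProduct.tmul_mul_tmul]
    | add X Y hX hY => simp only [map_add, add_mul, hX, hY]
  have hlam : W.conv (lamB ∘ₗ v.toLinearMap)
      (TensorProduct.mk k H B 1 ∘ₗ v.toLinearMap ∘ₗ W.antipode) h = h ⊗ₜ 1 := by
    rw [hv.lam_comp_v, W.conv_lTensor, hv.conv_v_vAntipode]
    simp only [coe_comp, Function.comp_apply, hs, map_sum, lTensor_tmul, convOne_apply,
      TensorProduct.tmul_smul, TensorProduct.smul_tmul']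
    rw [← TensorProduct.sum_tmul, W.sum_counit_smul_left hs]
  -- evaluate `∑ (ε_s ⊗ id)(λ(v h₁)) (1 ⊗ v(S h₂))` in two ways
  calc W.εs h ⊗ₜ[k] (1 : B)
      = rTensor B W.εs (∑ i ∈ s, lamB (v i.1) * (1 ⊗ₜ v (W.antipode i.2))) := by
        simpa [W.conv_eq_sum _ _ hs] using (congrArg (rTensor B W.εs) hlam).symm
    _ = ∑ i ∈ s, (1 ⊗ₜ v i.1) * (1 ⊗ₜ v (W.antipode i.2)) := by
        simp only [map_sum, ← hmul, hweak]
    _ = W.counit h • (1 : H ⊗[k] B) := by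
        simp [Algebra.TensorProduct.tmul_mul_tmul, ← TensorProduct.tmul_sum,
          hv.sum_v_mul_vAntipode hs, Algebra.TensorProduct.one_def]

theorem counit_mul_smul_one (x y : H) :
    W.counit (x * y) • (1 : B) = (W.counit x * W.counit y) • 1 := by
  have := congrArg (LinearMap.mul' k B ∘ TensorProduct.map
    (v.toLinearMap ∘ₗ W.εs ∘ₗ mulRight k y) LinearMap.id) (hv.εs_tmul_one x)
  simp only [Function.comp_apply, TensorProduct.map_tmul, Algebra.TensorProduct.one_def,
    map_smul, coe_comp, mulRight_apply, mul'_apply, id_coe, id_eq, mul_one, one_mul,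
    W.εs_εs_mul, AlgHom.toLinearMap_apply, hv.v_εs] at this
  rw [this, smul_smul]

theorem vAntipode_one : v (W.antipode 1) = 1 := by
  obtain ⟨s, hs⟩ := TensorProduct.exists_finset (W.comul 1)
  have := congrArg (LinearMap.mul' k B ∘ rTensor B (v.toLinearMap ∘ₗ W.antipode))
    hv.lTensor_v_comul_one
  simp only [Function.comp_apply, hs, map_sum, lTensor_tmul, rTensor_tmul, coe_comp,
    mul'_apply, Algebra.TensorProduct.one_def, mul_one, AlgHom.toLinearMap_apply] at this
  have hconv := LinearMap.congr_fun hv.conv_vAntipode_v 1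
  rw [W.conv_eq_sum _ _ hs, convOne_apply, ← hv.v_εt, W.εt_one, map_one] at hconv
  simpa [this] using hconv

section Antimultiplicativity

variable {a b : H} {ι κ : Type*} {s : Finset ι} {t : Finset κ} {x x' : ι → H} {y y' : κ → H}

theorem sum_vAntipode_mul_mul_v (ha : W.comul a = ∑ i ∈ s, x i ⊗ₜ[k] x' i)
    (hb : W.comul b = ∑ j ∈ t, y j ⊗ₜ[k] y' j) :
    ∑ j ∈ t, ∑ i ∈ s, v (W.antipode (x i * y j)) * v (x' i * y' j)
      = (W.counit a * W.counit b) • 1 := by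
  have := W.conv_eq_sum (v.toLinearMap ∘ₗ W.antipode) v.toLinearMap (W.comul_mul_eq_sum ha hb)
  rw [hv.conv_vAntipode_v, convOne_apply, hv.counit_mul_smul_one, Finset.sum_product,
    Finset.sum_comm] at this
  exact this.symm

theorem sum_v_mul_mul_vAntipode_mul_vAntipode (ha : W.comul a = ∑ i ∈ s, x i ⊗ₜ[k] x' i)
    (hb : W.comul b = ∑ j ∈ t, y j ⊗ₜ[k] y' j) :
    ∑ j ∈ t, ∑ i ∈ s, v (x i * y j) * (v (W.antipode (y' j)) * v (W.antipode (x' i)))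
      = (W.counit a * W.counit b) • 1 := by
  calc _ = ∑ i ∈ s,
        v (x i) * (∑ j ∈ t, v (y j) * v (W.antipode (y' j))) * v (W.antipode (x' i)) := by
        rw [Finset.sum_comm]
        simp only [map_mul, Finset.mul_sum, Finset.sum_mul, mul_assoc]
    _ = _ := by
        simp [hv.sum_v_mul_vAntipode hb, ← Finset.smul_sum, hv.sum_v_mul_vAntipode ha, smul_smul,
          mul_comm]

open WithConv in
theorem vAntipode_mul (x y : H) :
    v (W.antipode (x * y)) = v (W.antipode y) * v (W.antipode x) := by
  let _ := W.toCoalgebra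
  have hcomul (a : H) : Coalgebra.comul (R := k) a = W.comul a := rfl
  have hcounit (a : H) : Coalgebra.counit (R := k) a = W.counit a := rfl
  let F : WithConv (H ⊗[k] H →ₗ[k] B) := toConv (v.toLinearMap ∘ₗ LinearMap.mul' k H)
  let G : WithConv (H ⊗[k] H →ₗ[k] B) :=
    toConv ((v.toLinearMap ∘ₗ W.antipode) ∘ₗ LinearMap.mul' k H)
  let G' : WithConv (H ⊗[k] H →ₗ[k] B) := toConv (LinearMap.mul' k B ∘ₗ
    TensorProduct.map (v.toLinearMap ∘ₗ W.antipode) (v.toLinearMap ∘ₗ W.antipode) ∘ₗ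
      (TensorProduct.comm k H H).toLinearMap)
  have hGF : G * F = 1 := by
    refine WithConv.ext (TensorProduct.ext' fun a b => ?_)
    obtain ⟨s, ha⟩ := TensorProduct.exists_finset (W.comul a)
    obtain ⟨t, hb⟩ := TensorProduct.exists_finset (W.comul b)
    rw [LinearMap.convMul_apply, TensorProduct.comul_tmul, hcomul, hcomul, ha, hb]
    simpa [G, F, TensorProduct.sum_tmul, TensorProduct.tmul_sum, map_sum, hcounit,
      Algebra.algebraMap_eq_smul_one, mul_comm] using hv.sum_vAntipode_mul_mul_v ha hb
  have hFG' : F * G' = 1 := by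
    refine WithConv.ext (TensorProduct.ext' fun a b => ?_)
    obtain ⟨s, ha⟩ := TensorProduct.exists_finset (W.comul a)
    obtain ⟨t, hb⟩ := TensorProduct.exists_finset (W.comul b)
    rw [LinearMap.convMul_apply, TensorProduct.comul_tmul, hcomul, hcomul, ha, hb]
    simpa [G', F, TensorProduct.sum_tmul, TensorProduct.tmul_sum, map_sum, hcounit,
      Algebra.algebraMap_eq_smul_one, mul_comm] using hv.sum_v_mul_mul_vAntipode_mul_vAntipode ha hb
  simpa [G, G'] using
    LinearMap.congr_fun (congrArg ofConv (left_inv_eq_right_inv hGF hFG')) (x ⊗ₜ y)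

end Antimultiplicativity

theorem mul'_map_conv {M : Type*} [Ring M] [Algebra k M] (j : B →ₗ[k] M) (f g : H →ₗ[k] M) :
    LinearMap.mul' k M ∘ₗ
        TensorProduct.map (LinearMap.mul' k M ∘ₗ TensorProduct.map j f ∘ₗ rhoB) g ∘ₗ rhoB
      = LinearMap.mul' k M ∘ₗ TensorProduct.map j (W.conv f g) ∘ₗ rhoB := by
  set Φ := LinearMap.mul' k M ∘ₗ TensorProduct.map (LinearMap.mul' k M ∘ₗ TensorProduct.map j f) g
  have hcoassoc : TensorProduct.assoc k B H H ∘ₗ rTensor H rhoB ∘ₗ rhoB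
      = lTensor B W.comul ∘ₗ rhoB := LinearMap.ext hv.rho_coassoc
  have hassoc : Φ ∘ₗ (TensorProduct.assoc k B H H).symm.toLinearMap
      = LinearMap.mul' k M ∘ₗ TensorProduct.map j (LinearMap.mul' k M ∘ₗ TensorProduct.map f g) := by
    ext b x y
    simp [Φ, mul_assoc]
  calc _ = (Φ ∘ₗ (TensorProduct.assoc k B H H).symm.toLinearMap)
          ∘ₗ (TensorProduct.assoc k B H H ∘ₗ rTensor H rhoB ∘ₗ rhoB) := by
        ext b
        simp only [coe_comp, Function.comp_apply, LinearEquiv.coe_coe,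
          LinearEquiv.symm_apply_apply, map_rTensor, Φ]
        rfl
    _ = _ := by
        rw [hassoc, hcoassoc]
        ext b
        simp only [coe_comp, Function.comp_apply, map_lTensor, conv]
        rfl

theorem mem_coinvariants_iff {b : B} : b ∈ W.coinvariants rhoB ↔ rhoB b = b ⊗ₜ[k] (1 : H) := by
  have hweak : lTensor B W.εt (rhoB b) = b ⊗ₜ[k] (1 : H) := by
    rw [← hv.rho_weak, hv.rho_one, one_mul]
  exact Iff.of_eq (congrArg (rhoB b = ·) hweak)

theorem conv_vAntipode_tmul_one_rho_v :
    W.conv ((TensorProduct.mk k B H).flip 1 ∘ₗ v.toLinearMap ∘ₗ W.antipode)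
      (rhoB ∘ₗ v.toLinearMap) = TensorProduct.mk k B H 1 := by
  rw [hv.rho_comp_v, W.conv_rTensor, hv.conv_vAntipode_v]
  ext h
  obtain ⟨s, hs⟩ := TensorProduct.exists_finset (W.comul h)
  simp only [coe_comp, Function.comp_apply, hs, map_sum, rTensor_tmul, convOne_apply,
    TensorProduct.smul_tmul, ← TensorProduct.tmul_sum, W.sum_counit_smul_right hs,
    TensorProduct.mk_apply]

theorem conv_one_tmul_rho_vAntipode :
    W.conv (TensorProduct.mk k B H 1) (rhoB ∘ₗ v.toLinearMap ∘ₗ W.antipode)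
      = (TensorProduct.mk k B H).flip 1 ∘ₗ v.toLinearMap ∘ₗ W.antipode := by
  have hρ : W.conv (rhoB ∘ₗ v.toLinearMap) (rhoB ∘ₗ v.toLinearMap ∘ₗ W.antipode) = W.convOne := by
    rw [show rhoB = hv.rhoAlgHom.toLinearMap from rfl, ← W.comp_conv, hv.conv_v_vAntipode,
      W.algHom_comp_convOne]
  rw [← hv.conv_vAntipode_tmul_one_rho_v, W.conv_assoc, hρ, W.conv_convOne]

theorem rho_comp_Emap :
    rhoB ∘ₗ W.Emap rhoB v = (TensorProduct.mk k B H).flip 1 ∘ₗ W.Emap rhoB v := by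
  set j := (TensorProduct.mk k B H).flip 1
  set vS := v.toLinearMap ∘ₗ W.antipode
  have hj : LinearMap.mul' k (B ⊗[k] H) ∘ₗ TensorProduct.map j (TensorProduct.mk k B H 1) ∘ₗ rhoB
      = rhoB := by
    have : LinearMap.mul' k (B ⊗[k] H) ∘ₗ TensorProduct.map j (TensorProduct.mk k B H 1)
        = LinearMap.id := TensorProduct.ext' fun b h => by simp [j]
    rw [← LinearMap.comp_assoc, this, LinearMap.id_comp]
  have hρ : rhoB ∘ₗ LinearMap.mul' k B ∘ₗ TensorProduct.map LinearMap.id vS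
      = LinearMap.mul' k (B ⊗[k] H) ∘ₗ TensorProduct.map rhoB (rhoB ∘ₗ vS) :=
    TensorProduct.ext' fun b h => by simp [hv.rho_mul]
  have hj' : LinearMap.mul' k (B ⊗[k] H) ∘ₗ TensorProduct.map j (j ∘ₗ vS)
      = j ∘ₗ LinearMap.mul' k B ∘ₗ TensorProduct.map LinearMap.id vS :=
    TensorProduct.ext' fun b h => by simp [j]
  calc rhoB ∘ₗ W.Emap rhoB v
      = LinearMap.mul' k (B ⊗[k] H) ∘ₗ TensorProduct.map (LinearMap.mul' k (B ⊗[k] H) ∘ₗ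
          TensorProduct.map j (TensorProduct.mk k B H 1) ∘ₗ rhoB) (rhoB ∘ₗ vS) ∘ₗ rhoB := by
        rw [hj]
        exact LinearMap.ext fun b => LinearMap.congr_fun hρ (rhoB b)
    _ = j ∘ₗ W.Emap rhoB v := by
        rw [hv.mul'_map_conv, hv.conv_one_tmul_rho_vAntipode]
        exact LinearMap.ext fun b => LinearMap.congr_fun hj' (rhoB b)

theorem Emap_mem_coinvariants (b : B) : W.Emap rhoB v b ∈ W.coinvariants rhoB :=
  hv.mem_coinvariants_iff.2 (LinearMap.congr_fun hv.rho_comp_Emap b)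

theorem Emap_mul_of_mem {a : B} (ha : a ∈ W.coinvariants rhoB) (b : B) :
    W.Emap rhoB v (a * b) = a * W.Emap rhoB v b := by
  obtain ⟨s, hs⟩ := TensorProduct.exists_finset (rhoB b)
  simp [Emap_eq, hv.rho_mul, hv.mem_coinvariants_iff.1 ha, hs, Finset.mul_sum, map_sum,
    Algebra.TensorProduct.tmul_mul_tmul, mul_assoc]

theorem Emap_one : W.Emap rhoB v 1 = 1 := by
  simp [Emap_eq, hv.rho_one, Algebra.TensorProduct.one_def, hv.vAntipode_one]

theorem Emap_of_mem {a : B} (ha : a ∈ W.coinvariants rhoB) : W.Emap rhoB v a = a := by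
  simpa [hv.Emap_one] using hv.Emap_mul_of_mem ha 1

theorem Emap_v (h : H) : W.Emap rhoB v (v h) = W.counit h • 1 := by
  obtain ⟨s, hs⟩ := TensorProduct.exists_finset (W.comul h)
  simp [Emap_eq, hv.rho_v, hs, map_sum, hv.sum_v_mul_vAntipode hs]

theorem Emap_mul_v {a : B} (ha : a ∈ W.coinvariants rhoB) (h : H) :
    W.Emap rhoB v (a * v h) = W.counit h • a := by
  rw [hv.Emap_mul_of_mem ha, hv.Emap_v, mul_smul_comm, mul_one]

theorem rho_mul_v_of_mem {a : B} (ha : a ∈ W.coinvariants rhoB) {h : H} {ι : Type*}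
    {s : Finset ι} {x y : ι → H} (hrep : W.comul h = ∑ i ∈ s, x i ⊗ₜ[k] y i) :
    rhoB (a * v h) = ∑ i ∈ s, (a * v (x i)) ⊗ₜ[k] y i := by
  simp [hv.rho_mul, hv.mem_coinvariants_iff.1 ha, hv.rho_v, hrep, map_sum, Finset.mul_sum,
    Algebra.TensorProduct.tmul_mul_tmul]

theorem lTensor_Emap_lam {a : B} (ha : a ∈ W.coinvariants rhoB) :
    lTensor H (W.Emap rhoB v) (lamB a) = lamB a := by
  obtain ⟨s, hs⟩ := TensorProduct.exists_finset (lamB a)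
  have hlr : lTensor H rhoB (lamB a) = ∑ i ∈ s, i.1 ⊗ₜ[k] (i.2 ⊗ₜ[k] (1 : H)) := by
    rw [← hv.lam_rho_comm, hv.mem_coinvariants_iff.1 ha, rTensor_tmul, hs]
    simp [TensorProduct.sum_tmul, map_sum]
  have hE : lTensor H (W.Emap rhoB v)
      = lTensor H (LinearMap.mul' k B ∘ₗ lTensor B (v.toLinearMap ∘ₗ W.antipode)) ∘ₗ
        lTensor H rhoB := by
    rw [← lTensor_comp]
    rfl
  rw [hE, LinearMap.comp_apply, hlr, hs]
  simp [map_sum, hv.vAntipode_one]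

section Coinvariants

local notation "A" => W.coinvariants rhoB

noncomputable def coinvProj : B →ₗ[k] A :=
  LinearMap.codRestrict _ (W.Emap rhoB v) hv.Emap_mem_coinvariants

theorem subtype_comp_coinvProj : Submodule.subtype A ∘ₗ hv.coinvProj = W.Emap rhoB v := rfl

theorem coinvProj_coe (a : A) : hv.coinvProj a = a :=
  Subtype.ext (hv.Emap_of_mem a.2)

theorem coinvProj_coe_mul_v (a : A) (h : H) : hv.coinvProj (a * v h) = W.counit h • a :=
  Subtype.ext (hv.Emap_mul_v a.2 h)

noncomputable def coinvOne : A :=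
  ⟨1, hv.mem_coinvariants_iff.2 (by rw [hv.rho_one, Algebra.TensorProduct.one_def])⟩

theorem coe_mul_mem_coinvariants (a b : A) : (a * b : B) ∈ A := by
  rw [hv.mem_coinvariants_iff, hv.rho_mul, hv.mem_coinvariants_iff.1 a.2,
    hv.mem_coinvariants_iff.1 b.2, Algebra.TensorProduct.tmul_mul_tmul, mul_one]

noncomputable def coinvMul : A →ₗ[k] A →ₗ[k] A :=
  LinearMap.mk₂ k (fun a b => ⟨a * b, hv.coe_mul_mem_coinvariants a b⟩)
    (fun a a' b => Subtype.ext (add_mul (a : B) a' b))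
    (fun c a b => Subtype.ext (smul_mul_assoc c (a : B) b))
    (fun a b b' => Subtype.ext (mul_add (a : B) b b'))
    (fun c a b => Subtype.ext (mul_smul_comm c (a : B) b))

theorem coinvMul_coinvOne (a : A) : hv.coinvMul a hv.coinvOne = a :=
  Subtype.ext (mul_one (a : B))

noncomputable def coinvAct : H →ₗ[k] A →ₗ[k] A :=
  LinearMap.mk₂ k (fun h a => hv.coinvProj (v h * a))
    (fun h h' a => by rw [map_add, add_mul, map_add])
    (fun c h a => by rw [map_smul, smul_mul_assoc, map_smul])
    (fun h a a' => by rw [Submodule.coe_add, mul_add, map_add])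
    (fun c h a => by rw [Submodule.coe_smul, mul_smul_comm, map_smul])

theorem coe_coinvAct (h : H) (a : A) : (hv.coinvAct h a : B) = W.Emap rhoB v (v h * a) := rfl

theorem coe_coinvAct_eq_conv (h : H) (a : A) :
    (hv.coinvAct h a : B) = W.conv (mulRight k (a : B) ∘ₗ v.toLinearMap)
      (v.toLinearMap ∘ₗ W.antipode) h := by
  obtain ⟨s, hs⟩ := TensorProduct.exists_finset (W.comul h)
  simp [coe_coinvAct, Emap_eq, hv.rho_mul, hv.rho_v, hv.mem_coinvariants_iff.1 a.2, hs, map_sum,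
    Finset.sum_mul, Algebra.TensorProduct.tmul_mul_tmul, W.conv_eq_sum _ _ hs]

theorem coinvAct_mul (h h' : H) (a : A) :
    hv.coinvAct (h * h') a = hv.coinvAct h (hv.coinvAct h' a) := by
  obtain ⟨s, hs⟩ := TensorProduct.exists_finset (W.comul h)
  obtain ⟨t, ht⟩ := TensorProduct.exists_finset (W.comul h')
  apply Subtype.ext
  simp only [coe_coinvAct_eq_conv, W.conv_eq_sum _ _ (W.comul_mul_eq_sum hs ht),
    W.conv_eq_sum _ _ hs, W.conv_eq_sum _ _ ht, Finset.sum_product, Finset.sum_mul,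
    Finset.mul_sum, coe_comp, Function.comp_apply, mulRight_apply, AlgHom.toLinearMap_apply,
    map_mul, hv.vAntipode_mul, mul_assoc]

theorem coinvAct_one (a : A) : hv.coinvAct 1 a = a :=
  Subtype.ext (by rw [coe_coinvAct, map_one, one_mul, hv.Emap_of_mem a.2])

theorem coinvAct_coinvMul {ι : Type*} {s : Finset ι} {x y : ι → H} {h : H}
    (hrep : W.comul h = ∑ i ∈ s, x i ⊗ₜ[k] y i) (a b : A) :
    hv.coinvAct h (hv.coinvMul a b)
      = ∑ i ∈ s, hv.coinvMul (hv.coinvAct (x i) a) (hv.coinvAct (y i) b) := by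
  set R : B → H →ₗ[k] B := fun c => mulRight k c ∘ₗ v.toLinearMap
  set vS := v.toLinearMap ∘ₗ W.antipode
  have hRb : W.conv (W.conv (R a) vS) (R b) = R (a * b) := by
    rw [W.conv_assoc, W.conv_mulRight_comp, hv.conv_vAntipode_v, W.conv_mulRight_comp,
      W.conv_convOne, ← LinearMap.comp_assoc, ← mulRight_mul]
  apply Subtype.ext
  rw [Submodule.coe_sum, coe_coinvAct_eq_conv]
  calc W.conv (R (a * b)) vS h = W.conv (W.conv (R a) vS) (W.conv (R b) vS) h := by
        rw [← W.conv_assoc, hRb]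
    _ = _ := by
        rw [W.conv_eq_sum _ _ hrep]
        refine Finset.sum_congr rfl fun i _ => ?_
        exact congrArg₂ (· * ·) (hv.coe_coinvAct_eq_conv _ _).symm
          (hv.coe_coinvAct_eq_conv _ _).symm

theorem coinvAct_coinvOne (h : H) : hv.coinvAct h hv.coinvOne = W.counit h • hv.coinvOne :=
  Subtype.ext (by simp [coe_coinvAct, coinvOne, hv.Emap_v])

theorem coinvAct_εt_coinvOne (h : H) :
    hv.coinvAct h hv.coinvOne = hv.coinvAct (W.εt h) hv.coinvOne := by
  rw [hv.coinvAct_coinvOne, hv.coinvAct_coinvOne, W.counit_εt]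

noncomputable def coinvCoact : A →ₗ[k] H ⊗[k] A :=
  lTensor H hv.coinvProj ∘ₗ lamB ∘ₗ Submodule.subtype A

theorem lTensor_subtype_comp_coinvCoact :
    lTensor H (Submodule.subtype A) ∘ₗ hv.coinvCoact = lamB ∘ₗ Submodule.subtype A := by
  ext a
  change lTensor H (Submodule.subtype A) (lTensor H hv.coinvProj (lamB a)) = lamB a
  rw [← LinearMap.comp_apply, ← lTensor_comp, subtype_comp_coinvProj]
  exact hv.lTensor_Emap_lam a.2

theorem coinvCoact_apply (a : A) : hv.coinvCoact a = lTensor H hv.coinvProj (lamB a) := rfl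

theorem lTensor_subtype_coinvCoact (a : A) :
    lTensor H (Submodule.subtype A) (hv.coinvCoact a) = lamB a :=
  LinearMap.congr_fun hv.lTensor_subtype_comp_coinvCoact a

theorem lam_eq_of_coinvCoact_eq {a : A} {ι : Type*} {s : Finset ι} {a₁ : ι → H} {a₀ : ι → A}
    (ha : hv.coinvCoact a = ∑ i ∈ s, a₁ i ⊗ₜ[k] a₀ i) :
    lamB a = ∑ i ∈ s, a₁ i ⊗ₜ[k] (a₀ i : B) := by
  simp [← hv.lTensor_subtype_coinvCoact, ha, map_sum]

theorem coinvCoact_coassoc : lTensor H hv.coinvCoact ∘ₗ hv.coinvCoact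
    = (TensorProduct.assoc k H H A).toLinearMap ∘ₗ rTensor A W.comul ∘ₗ hv.coinvCoact := by
  have hnat : lTensor H (lTensor H hv.coinvProj) ∘ₗ (TensorProduct.assoc k H H B).toLinearMap
        ∘ₗ rTensor B W.comul
      = (TensorProduct.assoc k H H A).toLinearMap ∘ₗ rTensor A W.comul ∘ₗ
          lTensor H hv.coinvProj := TensorProduct.ext' fun x b => by
    simp only [coe_comp, Function.comp_apply, rTensor_tmul, lTensor_tmul, LinearEquiv.coe_coe]
    induction W.comul x using TensorProduct.induction_on with
    | zero => simp
    | tmul y z => rfl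
    | add u u' hu hu' => simp only [TensorProduct.add_tmul, map_add, hu, hu']
  ext a
  simp only [coe_comp, Function.comp_apply, LinearEquiv.coe_coe, coinvCoact_apply]
  rw [← lTensor_comp_apply, show hv.coinvCoact ∘ₗ hv.coinvProj
    = lTensor H hv.coinvProj ∘ₗ lamB ∘ₗ W.Emap rhoB v from rfl]
  simp only [lTensor_comp_apply]
  rw [hv.lTensor_Emap_lam a.2, hv.lam_coassoc]
  exact LinearMap.congr_fun hnat (lamB a)

theorem coinvCoact_counit : (TensorProduct.lid k A).toLinearMap ∘ₗ rTensor A W.counit ∘ₗ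
    hv.coinvCoact = LinearMap.id := by
  have hnat : (TensorProduct.lid k A).toLinearMap ∘ₗ rTensor A W.counit ∘ₗ lTensor H hv.coinvProj
      = hv.coinvProj ∘ₗ (TensorProduct.lid k B).toLinearMap ∘ₗ rTensor B W.counit :=
    TensorProduct.ext' fun x b => by simp
  ext a
  have := LinearMap.congr_fun hnat (lamB a)
  simp only [coe_comp, Function.comp_apply, LinearEquiv.coe_coe] at this
  simp only [coe_comp, Function.comp_apply, LinearEquiv.coe_coe, coinvCoact_apply, this,
    hv.lam_counit, hv.coinvProj_coe, id_coe, id_eq]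

theorem coinvCoact_coinvMul {ι κ : Type*} {s : Finset ι} {t : Finset κ} {a b : A}
    {a₁ : ι → H} {a₀ : ι → A} {b₁ : κ → H} {b₀ : κ → A}
    (ha : hv.coinvCoact a = ∑ i ∈ s, a₁ i ⊗ₜ[k] a₀ i)
    (hb : hv.coinvCoact b = ∑ j ∈ t, b₁ j ⊗ₜ[k] b₀ j) :
    hv.coinvCoact (hv.coinvMul a b)
      = ∑ i ∈ s, ∑ j ∈ t, (a₁ i * b₁ j) ⊗ₜ[k] hv.coinvMul (a₀ i) (b₀ j) := by
  rw [coinvCoact_apply]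
  change lTensor H hv.coinvProj (lamB (a * b)) = _
  rw [hv.lam_mul, hv.lam_eq_of_coinvCoact_eq ha, hv.lam_eq_of_coinvCoact_eq hb, Finset.sum_mul_sum]
  simp only [map_sum, Algebra.TensorProduct.tmul_mul_tmul, lTensor_tmul]
  exact Finset.sum_congr rfl fun i _ => Finset.sum_congr rfl fun j _ =>
    congrArg _ (hv.coinvProj_coe (hv.coinvMul (a₀ i) (b₀ j)))

theorem coinvCoact_coinvOne : hv.coinvCoact hv.coinvOne = 1 ⊗ₜ[k] hv.coinvOne := by
  rw [coinvCoact_apply]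
  change lTensor H hv.coinvProj (lamB 1) = _
  rw [hv.lam_one, Algebra.TensorProduct.one_def, lTensor_tmul]
  exact congrArg _ (hv.coinvProj_coe hv.coinvOne)

theorem rTensor_εs_coinvCoact_coinvOne :
    rTensor A W.εs (hv.coinvCoact hv.coinvOne) = hv.coinvCoact hv.coinvOne := by
  rw [hv.coinvCoact_coinvOne, rTensor_tmul, W.εs_one]

attribute [local instance] coinvariantsAddCommGroup

local notation "smashRel" => W.smashRel hv.coinvMul hv.coinvOne hv.coinvAct

theorem smashRel_le_ker : smashRel ≤ LinearMap.ker (W.coinvMulV rhoB v) := by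
  rw [WeakHopfAlgebra.smashRel, Submodule.span_le]
  rintro _ ⟨a, h, _, ⟨z, rfl⟩, rfl⟩
  simp only [SetLike.mem_coe, LinearMap.mem_ker, map_sub, hv.coinvAct_coinvOne, map_smul,
    hv.coinvMul_coinvOne, coinvMulV_tmul, map_mul, hv.v_εt, W.counit_εt, Submodule.coe_smul,
    smul_mul_assoc, one_mul, mul_smul_comm, sub_self]

noncomputable def smashToB : ((A ⊗[k] H) ⧸ smashRel) →ₗ[k] B :=
  Submodule.liftQ smashRel (W.coinvMulV rhoB v) hv.smashRel_le_ker

noncomputable def smashOfB : B →ₗ[k] (A ⊗[k] H) ⧸ smashRel :=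
  Submodule.mkQ smashRel ∘ₗ rTensor H hv.coinvProj ∘ₗ rhoB

theorem smashOfB_mul_v (a : A) (h : H) :
    hv.smashOfB (a * v h) = Submodule.mkQ smashRel (a ⊗ₜ h) := by
  obtain ⟨s, hs⟩ := TensorProduct.exists_finset (W.comul h)
  simp only [smashOfB, coe_comp, Function.comp_apply, hv.rho_mul_v_of_mem a.2 hs, map_sum,
    rTensor_tmul,
    hv.coinvProj_coe_mul_v, TensorProduct.smul_tmul, ← TensorProduct.tmul_sum,
    W.sum_counit_smul_right hs]

theorem smashToB_comp_smashOfB : hv.smashToB ∘ₗ hv.smashOfB = LinearMap.id := by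
  have hφψ : hv.smashToB ∘ₗ hv.smashOfB
      = LinearMap.mul' k B ∘ₗ TensorProduct.map (W.Emap rhoB v) v.toLinearMap ∘ₗ rhoB := by
    rw [smashOfB, ← LinearMap.comp_assoc, smashToB, Submodule.liftQ_mkQ, coinvMulV,
      LinearMap.comp_assoc, ← LinearMap.comp_assoc rhoB, LinearMap.map_comp_rTensor]
    rfl
  rw [hφψ, Emap_eq, hv.mul'_map_conv, hv.conv_vAntipode_v]
  ext b
  obtain ⟨s, hs⟩ := TensorProduct.exists_finset (rhoB b)
  simpa [hs, map_sum, convOne_apply] using hv.rho_counit b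

theorem smashOfB_comp_smashToB : hv.smashOfB ∘ₗ hv.smashToB = LinearMap.id :=
  Submodule.linearMap_qext _ (TensorProduct.ext' fun a h => hv.smashOfB_mul_v a h)

noncomputable def smashEquiv : ((A ⊗[k] H) ⧸ smashRel) ≃ₗ[k] B :=
  LinearEquiv.ofLinearMap hv.smashToB hv.smashOfB hv.smashToB_comp_smashOfB
    hv.smashOfB_comp_smashToB

theorem smashEquiv_mk (a : A) (h : H) :
    hv.smashEquiv (Submodule.mkQ smashRel (a ⊗ₜ h)) = a * v h := rfl

theorem smashEquiv_symm_mul_v (a : A) (h : H) :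
    hv.smashEquiv.symm (a * v h) = Submodule.mkQ smashRel (a ⊗ₜ h) :=
  hv.smashOfB_mul_v a h

noncomputable def smashMul :
    ((A ⊗[k] H) ⧸ smashRel) →ₗ[k] ((A ⊗[k] H) ⧸ smashRel) →ₗ[k] ((A ⊗[k] H) ⧸ smashRel) :=
  ((LinearMap.mul k B).compl₁₂ hv.smashEquiv.toLinearMap hv.smashEquiv.toLinearMap).compr₂
    hv.smashEquiv.symm.toLinearMap

theorem smashEquiv_smashMul (x y : (A ⊗[k] H) ⧸ smashRel) :
    hv.smashEquiv (hv.smashMul x y) = hv.smashEquiv x * hv.smashEquiv y :=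
  hv.smashEquiv.apply_symm_apply _

theorem smashMul_assoc (x y z : (A ⊗[k] H) ⧸ smashRel) :
    hv.smashMul (hv.smashMul x y) z = hv.smashMul x (hv.smashMul y z) :=
  hv.smashEquiv.injective (by simp only [smashEquiv_smashMul, mul_assoc])

theorem smashEquiv_one : hv.smashEquiv (Submodule.mkQ smashRel (hv.coinvOne ⊗ₜ 1)) = 1 := by
  rw [smashEquiv_mk, map_one, mul_one]
  rfl

theorem one_smashMul (x : (A ⊗[k] H) ⧸ smashRel) :
    hv.smashMul (Submodule.mkQ smashRel (hv.coinvOne ⊗ₜ 1)) x = x :=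
  hv.smashEquiv.injective (by rw [smashEquiv_smashMul, smashEquiv_one, one_mul])

theorem smashMul_one (x : (A ⊗[k] H) ⧸ smashRel) :
    hv.smashMul x (Submodule.mkQ smashRel (hv.coinvOne ⊗ₜ 1)) = x :=
  hv.smashEquiv.injective (by rw [smashEquiv_smashMul, smashEquiv_one, mul_one])

theorem sum_coinvAct_mul_v {ι : Type*} {s : Finset ι} {x y : ι → H} {h : H}
    (hrep : W.comul h = ∑ i ∈ s, x i ⊗ₜ[k] y i) (a : A) :
    ∑ i ∈ s, (hv.coinvAct (x i) a : B) * v (y i) = v h * a := by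
  have hconv : W.conv (W.conv (mulRight k (a : B) ∘ₗ v.toLinearMap)
      (v.toLinearMap ∘ₗ W.antipode)) v.toLinearMap = mulRight k (a : B) ∘ₗ v.toLinearMap := by
    rw [W.conv_assoc, hv.conv_vAntipode_v, W.conv_convOne]
  simpa [W.conv_eq_sum _ _ hrep, coe_coinvAct_eq_conv] using LinearMap.congr_fun hconv h

theorem smashMul_mk {ι : Type*} {s : Finset ι} {x y : ι → H} {h : H}
    (hrep : W.comul h = ∑ i ∈ s, x i ⊗ₜ[k] y i) (a a' : A) (h' : H) :
    hv.smashMul (Submodule.mkQ smashRel (a ⊗ₜ h)) (Submodule.mkQ smashRel (a' ⊗ₜ h'))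
      = Submodule.mkQ smashRel
          (∑ i ∈ s, hv.coinvMul a (hv.coinvAct (x i) a') ⊗ₜ[k] (y i * h')) := by
  apply hv.smashEquiv.injective
  rw [smashEquiv_smashMul, smashEquiv_mk, smashEquiv_mk, map_sum, mul_assoc, ← mul_assoc (v h),
    ← hv.sum_coinvAct_mul_v hrep a', Finset.sum_mul, Finset.mul_sum, map_sum]
  refine Finset.sum_congr rfl fun i _ => ?_
  rw [hv.smashEquiv_mk, map_mul]
  simp only [coinvMul, mk₂_apply, mul_assoc]

noncomputable def smashRho : ((A ⊗[k] H) ⧸ smashRel) →ₗ[k] ((A ⊗[k] H) ⧸ smashRel) ⊗[k] H :=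
  rTensor H hv.smashEquiv.symm.toLinearMap ∘ₗ rhoB ∘ₗ hv.smashEquiv.toLinearMap

noncomputable def smashLam : ((A ⊗[k] H) ⧸ smashRel) →ₗ[k] H ⊗[k] ((A ⊗[k] H) ⧸ smashRel) :=
  lTensor H hv.smashEquiv.symm.toLinearMap ∘ₗ lamB ∘ₗ hv.smashEquiv.toLinearMap

theorem rho_smashEquiv (q : (A ⊗[k] H) ⧸ smashRel) :
    rhoB (hv.smashEquiv q) = rTensor H hv.smashEquiv.toLinearMap (hv.smashRho q) := by
  simp [smashRho, ← rTensor_comp_apply]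

theorem lam_smashEquiv (q : (A ⊗[k] H) ⧸ smashRel) :
    lamB (hv.smashEquiv q) = lTensor H hv.smashEquiv.toLinearMap (hv.smashLam q) := by
  simp [smashLam, ← lTensor_comp_apply]

theorem smashRho_mk {ι : Type*} {s : Finset ι} {x y : ι → H} {h : H}
    (hrep : W.comul h = ∑ i ∈ s, x i ⊗ₜ[k] y i) (a : A) :
    hv.smashRho (Submodule.mkQ smashRel (a ⊗ₜ h))
      = ∑ i ∈ s, Submodule.mkQ smashRel (a ⊗ₜ x i) ⊗ₜ[k] y i := by
  rw [smashRho, comp_apply, comp_apply, LinearEquiv.coe_coe, hv.smashEquiv_mk,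
    hv.rho_mul_v_of_mem a.2 hrep, map_sum]
  simp only [rTensor_tmul, LinearEquiv.coe_coe, smashEquiv_symm_mul_v]

theorem smashLam_mk {ι κ : Type*} {s : Finset ι} {t : Finset κ} {a : A} {h : H}
    {a₁ : ι → H} {a₀ : ι → A} {x y : κ → H}
    (ha : hv.coinvCoact a = ∑ i ∈ s, a₁ i ⊗ₜ[k] a₀ i)
    (hrep : W.comul h = ∑ j ∈ t, x j ⊗ₜ[k] y j) :
    hv.smashLam (Submodule.mkQ smashRel (a ⊗ₜ h))
      = ∑ i ∈ s, ∑ j ∈ t, (a₁ i * x j) ⊗ₜ[k] Submodule.mkQ smashRel (a₀ i ⊗ₜ y j) := by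
  have hlam : lamB (a * v h) = ∑ i ∈ s, ∑ j ∈ t, (a₁ i * x j) ⊗ₜ[k] ((a₀ i : B) * v (y j)) := by
    simp [hv.lam_mul, hv.lam_eq_of_coinvCoact_eq ha, hv.lam_v, hrep, map_sum, Finset.sum_mul_sum,
      Algebra.TensorProduct.tmul_mul_tmul]
  rw [smashLam, comp_apply, comp_apply, LinearEquiv.coe_coe, hv.smashEquiv_mk, hlam]
  simp only [map_sum, lTensor_tmul, LinearEquiv.coe_coe, smashEquiv_symm_mul_v]

end Coinvariants

end IsBicomoduleAlgebraHom

end WeakHopfAlgebra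

open WeakHopfAlgebra in
theorem weakHopf_structure_theorem_bicomodule_algebras_general
    {k H : Type*} [CommRing k] [Ring H] [Algebra k H]
    (W : WeakHopfAlgebra k H)
    {B : Type*} [Ring B] [Algebra k B]
    (lamB : B →ₗ[k] H ⊗[k] B) (rhoB : B →ₗ[k] B ⊗[k] H)
    (hrho_mul : ∀ b b' : B, rhoB (b * b') = rhoB b * rhoB b')
    (hrho_one : rhoB 1 = 1)
    (hrho_counit : ∀ b, (TensorProduct.rid k B) ((LinearMap.lTensor B W.counit) (rhoB b)) = b)
    (hrho_coassoc : ∀ b, (TensorProduct.assoc k B H H) ((LinearMap.rTensor H rhoB) (rhoB b))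
      = (LinearMap.lTensor B W.comul) (rhoB b))
    (hrho_weak : ∀ b : B, rhoB 1 * (b ⊗ₜ[k] (1 : H)) = (LinearMap.lTensor B W.εt) (rhoB b))
    (hlam_mul : ∀ b b' : B, lamB (b * b') = lamB b * lamB b')
    (hlam_one : lamB 1 = 1)
    (hlam_counit : ∀ b, (TensorProduct.lid k B) ((LinearMap.rTensor B W.counit) (lamB b)) = b)
    (hlam_coassoc : ∀ b, (LinearMap.lTensor H lamB) (lamB b)
      = (TensorProduct.assoc k H H B) ((LinearMap.rTensor B W.comul) (lamB b)))
    (hlam_weak : ∀ b : B, ((1 : H) ⊗ₜ[k] b) * lamB 1 = (LinearMap.rTensor B W.εs) (lamB b))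
    (hbicomod : ∀ b, (TensorProduct.assoc k H B H) ((LinearMap.rTensor H lamB) (rhoB b))
      = (LinearMap.lTensor H rhoB) (lamB b))
    (v : H →ₐ[k] B)
    (hv_rho : ∀ h, rhoB (v h) = (LinearMap.rTensor H v.toLinearMap) (W.comul h))
    (hv_lam : ∀ h, lamB (v h) = (LinearMap.lTensor H v.toLinearMap) (W.comul h)) :
    letI A : Submodule k B := W.coinvariants rhoB
    ∃ (actA : H →ₗ[k] A →ₗ[k] A) (mulA : A →ₗ[k] A →ₗ[k] A) (oneA : A)
      (coactA : A →ₗ[k] H ⊗[k] A),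
      -- the structure maps of `A` are the restrictions from `B` (the action being `h▷a = E(v(h)a)`):
      (∀ (h : H) (a : A), (actA h a : B) = W.Emap rhoB v (v h * (a : B))) ∧
      (∀ a b : A, (mulA a b : B) = (a : B) * (b : B)) ∧
      ((oneA : B) = 1) ∧
      ((LinearMap.lTensor H A.subtype) ∘ₗ coactA = lamB ∘ₗ A.subtype) ∧
      -- `A` is a left `H`-module algebra:
      (∀ (h h' : H) (a : A), actA (h * h') a = actA h (actA h' a)) ∧
      (∀ a : A, actA 1 a = a) ∧
      (∀ (h : H) (a b : A) (n : ℕ) (h1 h2 : Fin n → H),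
        W.comul h = ∑ i, h1 i ⊗ₜ[k] h2 i →
        actA h (mulA a b) = ∑ i, mulA (actA (h1 i) a) (actA (h2 i) b)) ∧
      (∀ h : H, actA h oneA = actA (W.εt h) oneA) ∧
      -- `A` is a left `H`-comodule algebra:
      ((LinearMap.lTensor H coactA) ∘ₗ coactA
        = (TensorProduct.assoc k H H A).toLinearMap ∘ₗ
            (LinearMap.rTensor (↥A) W.comul) ∘ₗ coactA) ∧
      ((TensorProduct.lid k A).toLinearMap ∘ₗ (LinearMap.rTensor (↥A) W.counit) ∘ₗ coactA
        = LinearMap.id) ∧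
      (∀ (a b : A) (N N' : ℕ) (a1 : Fin N → H) (a0 : Fin N → A)
          (b1 : Fin N' → H) (b0 : Fin N' → A),
        coactA a = ∑ i, a1 i ⊗ₜ[k] a0 i → coactA b = ∑ j, b1 j ⊗ₜ[k] b0 j →
        coactA (mulA a b) = ∑ i, ∑ j, (a1 i * b1 j) ⊗ₜ[k] mulA (a0 i) (b0 j)) ∧
      (coactA oneA = (LinearMap.rTensor (↥A) W.εs) (coactA oneA)) ∧
      -- the smash product `A # H` and the isomorphism `φ(a # h) = a v(h)`:
      (letI rel := W.smashRel mulA oneA actA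
       letI : AddCommGroup A := Submodule.addCommGroup A
       ∃ (m : ((A ⊗[k] H) ⧸ rel) →ₗ[k] ((A ⊗[k] H) ⧸ rel) →ₗ[k] ((A ⊗[k] H) ⧸ rel))
         (rhoQ : ((A ⊗[k] H) ⧸ rel) →ₗ[k] ((A ⊗[k] H) ⧸ rel) ⊗[k] H)
         (lamQ : ((A ⊗[k] H) ⧸ rel) →ₗ[k] H ⊗[k] ((A ⊗[k] H) ⧸ rel))
         (φ : ((A ⊗[k] H) ⧸ rel) →ₗ[k] B),
        -- the smash product multiplication, coactions and `φ`:
        (∀ (a a' : A) (h h' : H) (n : ℕ) (h1 h2 : Fin n → H),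
          W.comul h = ∑ i, h1 i ⊗ₜ[k] h2 i →
          m (rel.mkQ (a ⊗ₜ[k] h)) (rel.mkQ (a' ⊗ₜ[k] h'))
            = rel.mkQ (∑ i, mulA a (actA (h1 i) a') ⊗ₜ[k] (h2 i * h'))) ∧
        (∀ x y z, m (m x y) z = m x (m y z)) ∧
        (∀ x, m (rel.mkQ (oneA ⊗ₜ[k] (1 : H))) x = x) ∧
        (∀ x, m x (rel.mkQ (oneA ⊗ₜ[k] (1 : H))) = x) ∧
        (∀ (a : A) (h : H) (n : ℕ) (h1 h2 : Fin n → H),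
          W.comul h = ∑ i, h1 i ⊗ₜ[k] h2 i →
          rhoQ (rel.mkQ (a ⊗ₜ[k] h)) = ∑ i, rel.mkQ (a ⊗ₜ[k] h1 i) ⊗ₜ[k] h2 i) ∧
        (∀ (a : A) (h : H) (N n : ℕ) (a1 : Fin N → H) (a0 : Fin N → A) (h1 h2 : Fin n → H),
          coactA a = ∑ i, a1 i ⊗ₜ[k] a0 i → W.comul h = ∑ j, h1 j ⊗ₜ[k] h2 j →
          lamQ (rel.mkQ (a ⊗ₜ[k] h))
            = ∑ i, ∑ j, (a1 i * h1 j) ⊗ₜ[k] rel.mkQ (a0 i ⊗ₜ[k] h2 j)) ∧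
        (∀ (a : A) (h : H), φ (rel.mkQ (a ⊗ₜ[k] h)) = (a : B) * v h) ∧
        -- `φ` is an isomorphism of `H`-bicomodule algebras:
        Function.Bijective φ ∧
        (∀ x y, φ (m x y) = φ x * φ y) ∧
        (φ (rel.mkQ (oneA ⊗ₜ[k] (1 : H))) = 1) ∧
        (∀ q, rhoB (φ q) = (LinearMap.rTensor H φ) (rhoQ q)) ∧
        (∀ q, lamB (φ q) = (LinearMap.lTensor H φ) (lamQ q))) := by
  have hv : W.IsBicomoduleAlgebraHom lamB rhoB v :=
    ⟨hrho_mul, hrho_one, hrho_counit, hrho_coassoc, hrho_weak, hlam_mul, hlam_one, hlam_counit,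
      hlam_coassoc, hlam_weak, hbicomod, hv_rho, hv_lam⟩
  refine ⟨hv.coinvAct, hv.coinvMul, hv.coinvOne, hv.coinvCoact, fun _ _ => rfl, fun _ _ => rfl,
    rfl, hv.lTensor_subtype_comp_coinvCoact, hv.coinvAct_mul, hv.coinvAct_one,
    fun _ a b _ _ _ hrep => hv.coinvAct_coinvMul hrep a b, hv.coinvAct_εt_coinvOne,
    hv.coinvCoact_coassoc, hv.coinvCoact_counit,
    fun _ _ _ _ _ _ _ _ ha hb => hv.coinvCoact_coinvMul ha hb,
    hv.rTensor_εs_coinvCoact_coinvOne.symm, hv.smashMul, hv.smashRho, hv.smashLam,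
    hv.smashEquiv.toLinearMap, fun a a' _ h' _ _ _ hrep => hv.smashMul_mk hrep a a' h',
    hv.smashMul_assoc, hv.one_smashMul, hv.smashMul_one,
    fun a _ _ _ _ hrep => hv.smashRho_mk hrep a,
    fun _ _ _ _ _ _ _ _ ha hrep => hv.smashLam_mk ha hrep, hv.smashEquiv_mk,
    hv.smashEquiv.bijective, hv.smashEquiv_smashMul, hv.smashEquiv_one, hv.rho_smashEquiv,
    hv.lam_smashEquiv⟩

open WeakHopfAlgebra in
/-- Structure theorem for weak Hopf bicomodule algebras: if `H` is a weak Hopf algebra with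
bijective antipode, `B` an `H`-bicomodule algebra and `v : H → B` a morphism of `H`-bicomodule
algebras, then `A = B^{co(H)}` (with action `h▷a = E(v(h)a)`, multiplication and left coaction
restricted from `B`) is a left `H`-module algebra and a left `H`-comodule algebra, and
`φ : A # H → B, φ(a # h) = a v(h)` is an isomorphism of `H`-bicomodule algebras. -/
theorem weakHopf_structure_theorem_bicomodule_algebras
    {k H : Type*} [CommRing k] [Ring H] [Algebra k H]
    (W : WeakHopfAlgebra k H) (hS : Function.Bijective W.antipode)
    {B : Type*} [Ring B] [Algebra k B]
    (lamB : B →ₗ[k] H ⊗[k] B) (rhoB : B →ₗ[k] B ⊗[k] H)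
    (hrho_mul : ∀ b b' : B, rhoB (b * b') = rhoB b * rhoB b')
    (hrho_one : rhoB 1 = 1)
    (hrho_counit : ∀ b, (TensorProduct.rid k B) ((LinearMap.lTensor B W.counit) (rhoB b)) = b)
    (hrho_coassoc : ∀ b, (TensorProduct.assoc k B H H) ((LinearMap.rTensor H rhoB) (rhoB b))
      = (LinearMap.lTensor B W.comul) (rhoB b))
    (hrho_weak : ∀ b : B, rhoB 1 * (b ⊗ₜ[k] (1 : H)) = (LinearMap.lTensor B W.εt) (rhoB b))
    (hlam_mul : ∀ b b' : B, lamB (b * b') = lamB b * lamB b')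
    (hlam_one : lamB 1 = 1)
    (hlam_counit : ∀ b, (TensorProduct.lid k B) ((LinearMap.rTensor B W.counit) (lamB b)) = b)
    (hlam_coassoc : ∀ b, (LinearMap.lTensor H lamB) (lamB b)
      = (TensorProduct.assoc k H H B) ((LinearMap.rTensor B W.comul) (lamB b)))
    (hlam_weak : ∀ b : B, ((1 : H) ⊗ₜ[k] b) * lamB 1 = (LinearMap.rTensor B W.εs) (lamB b))
    (hbicomod : ∀ b, (TensorProduct.assoc k H B H) ((LinearMap.rTensor H lamB) (rhoB b))
      = (LinearMap.lTensor H rhoB) (lamB b))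
    (v : H →ₐ[k] B)
    (hv_rho : ∀ h, rhoB (v h) = (LinearMap.rTensor H v.toLinearMap) (W.comul h))
    (hv_lam : ∀ h, lamB (v h) = (LinearMap.lTensor H v.toLinearMap) (W.comul h)) :
    letI A : Submodule k B := W.coinvariants rhoB
    ∃ (actA : H →ₗ[k] A →ₗ[k] A) (mulA : A →ₗ[k] A →ₗ[k] A) (oneA : A)
      (coactA : A →ₗ[k] H ⊗[k] A),
      -- the structure maps of `A` are the restrictions from `B` (the action being `h▷a = E(v(h)a)`):
      (∀ (h : H) (a : A), (actA h a : B) = W.Emap rhoB v (v h * (a : B))) ∧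
      (∀ a b : A, (mulA a b : B) = (a : B) * (b : B)) ∧
      ((oneA : B) = 1) ∧
      ((LinearMap.lTensor H A.subtype) ∘ₗ coactA = lamB ∘ₗ A.subtype) ∧
      -- `A` is a left `H`-module algebra:
      (∀ (h h' : H) (a : A), actA (h * h') a = actA h (actA h' a)) ∧
      (∀ a : A, actA 1 a = a) ∧
      (∀ (h : H) (a b : A) (n : ℕ) (h1 h2 : Fin n → H),
        W.comul h = ∑ i, h1 i ⊗ₜ[k] h2 i →
        actA h (mulA a b) = ∑ i, mulA (actA (h1 i) a) (actA (h2 i) b)) ∧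
      (∀ h : H, actA h oneA = actA (W.εt h) oneA) ∧
      -- `A` is a left `H`-comodule algebra:
      ((LinearMap.lTensor H coactA) ∘ₗ coactA
        = (TensorProduct.assoc k H H A).toLinearMap ∘ₗ
            (LinearMap.rTensor (↥A) W.comul) ∘ₗ coactA) ∧
      ((TensorProduct.lid k A).toLinearMap ∘ₗ (LinearMap.rTensor (↥A) W.counit) ∘ₗ coactA
        = LinearMap.id) ∧
      (∀ (a b : A) (N N' : ℕ) (a1 : Fin N → H) (a0 : Fin N → A)
          (b1 : Fin N' → H) (b0 : Fin N' → A),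
        coactA a = ∑ i, a1 i ⊗ₜ[k] a0 i → coactA b = ∑ j, b1 j ⊗ₜ[k] b0 j →
        coactA (mulA a b) = ∑ i, ∑ j, (a1 i * b1 j) ⊗ₜ[k] mulA (a0 i) (b0 j)) ∧
      (coactA oneA = (LinearMap.rTensor (↥A) W.εs) (coactA oneA)) ∧
      -- the smash product `A # H` and the isomorphism `φ(a # h) = a v(h)`:
      (letI rel := W.smashRel mulA oneA actA
       letI : AddCommGroup A := Submodule.addCommGroup A
       ∃ (m : ((A ⊗[k] H) ⧸ rel) →ₗ[k] ((A ⊗[k] H) ⧸ rel) →ₗ[k] ((A ⊗[k] H) ⧸ rel))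
         (rhoQ : ((A ⊗[k] H) ⧸ rel) →ₗ[k] ((A ⊗[k] H) ⧸ rel) ⊗[k] H)
         (lamQ : ((A ⊗[k] H) ⧸ rel) →ₗ[k] H ⊗[k] ((A ⊗[k] H) ⧸ rel))
         (φ : ((A ⊗[k] H) ⧸ rel) →ₗ[k] B),
        -- the smash product multiplication, coactions and `φ`:
        (∀ (a a' : A) (h h' : H) (n : ℕ) (h1 h2 : Fin n → H),
          W.comul h = ∑ i, h1 i ⊗ₜ[k] h2 i →
          m (rel.mkQ (a ⊗ₜ[k] h)) (rel.mkQ (a' ⊗ₜ[k] h'))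
            = rel.mkQ (∑ i, mulA a (actA (h1 i) a') ⊗ₜ[k] (h2 i * h'))) ∧
        (∀ x y z, m (m x y) z = m x (m y z)) ∧
        (∀ x, m (rel.mkQ (oneA ⊗ₜ[k] (1 : H))) x = x) ∧
        (∀ x, m x (rel.mkQ (oneA ⊗ₜ[k] (1 : H))) = x) ∧
        (∀ (a : A) (h : H) (n : ℕ) (h1 h2 : Fin n → H),
          W.comul h = ∑ i, h1 i ⊗ₜ[k] h2 i →
          rhoQ (rel.mkQ (a ⊗ₜ[k] h)) = ∑ i, rel.mkQ (a ⊗ₜ[k] h1 i) ⊗ₜ[k] h2 i) ∧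
        (∀ (a : A) (h : H) (N n : ℕ) (a1 : Fin N → H) (a0 : Fin N → A) (h1 h2 : Fin n → H),
          coactA a = ∑ i, a1 i ⊗ₜ[k] a0 i → W.comul h = ∑ j, h1 j ⊗ₜ[k] h2 j →
          lamQ (rel.mkQ (a ⊗ₜ[k] h))
            = ∑ i, ∑ j, (a1 i * h1 j) ⊗ₜ[k] rel.mkQ (a0 i ⊗ₜ[k] h2 j)) ∧
        (∀ (a : A) (h : H), φ (rel.mkQ (a ⊗ₜ[k] h)) = (a : B) * v h) ∧
        -- `φ` is an isomorphism of `H`-bicomodule algebras: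
        Function.Bijective φ ∧
        (∀ x y, φ (m x y) = φ x * φ y) ∧
        (φ (rel.mkQ (oneA ⊗ₜ[k] (1 : H))) = 1) ∧
        (∀ q, rhoB (φ q) = (LinearMap.rTensor H φ) (rhoQ q)) ∧
        (∀ q, lamB (φ q) = (LinearMap.lTensor H φ) (lamQ q))) :=
  weakHopf_structure_theorem_bicomodule_algebras_general W lamB rhoB hrho_mul hrho_one hrho_counit
    hrho_coassoc hrho_weak hlam_mul hlam_one hlam_counit hlam_coassoc hlam_weak hbicomod v hv_rho
    hv_lam
end
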